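/- arXiv:1909.02413 — 7 statements merged into one kernel-verified Lean document; each statement's English description precedes it below -/
import Mathlib

section
/- Let A be a ring and (A_i)_{i∈I} a nonempty family of subrings of A that is directed by inclusion and satisfies A = ⋃_{i∈I} A_i. Assume that each A_i is right regular coherent and that, for each i, A is free as a left A_i-module. Then A is right regular coherent. -/
universe u v w

open Finsupp

namespace FreeBC

variable {S T : Type u} [Ring S] [Ring T] (σ : S →+* T) {κ : Type u} (b : κ → T)

/-- `eps f = ∑ b l * σ (f l)`. -/
def eps (f : κ →₀ S) : T := f.sum fun l c => b l * σ c

lemma eps_single (l : κ) (c : S) : eps σ b (single l c) = b l * σ c :=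
  Finsupp.sum_single_index (by simp)

lemma eps_zero : eps σ b 0 = 0 := Finsupp.sum_zero_index

lemma eps_add (f g : κ →₀ S) : eps σ b (f + g) = eps σ b f + eps σ b g :=
  Finsupp.sum_add_index' (by simp) (by intro l c d; rw [map_add, mul_add])

/-- `eps` as an additive monoid hom. -/
def epsHom : (κ →₀ S) →+ T where
  toFun := eps σ b
  map_zero' := eps_zero σ b
  map_add' := eps_add σ b

lemma epsHom_apply (f : κ →₀ S) : epsHom σ b f = eps σ b f := rfl

lemma eps_mapRange_mul (c : S) (g : κ →₀ S) :
    eps σ b (mapRange (· * c) (zero_mul c) g) = eps σ b g * σ c := by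
  rw [eps, Finsupp.sum_mapRange_index (by simp), eps, Finsupp.sum_mul]
  simp [mul_assoc]

variable (hb : Function.Bijective (eps σ b))

/-- The coordinates of an element of `T` w.r.t. the basis `b`. -/
noncomputable def coord (t : T) : κ →₀ S := (Equiv.ofBijective _ hb).symm t

lemma eps_coord (t : T) : eps σ b (coord σ b hb t) = t :=
  (Equiv.ofBijective _ hb).apply_symm_apply t

lemma coord_eps (f : κ →₀ S) : coord σ b hb (eps σ b f) = f :=
  (Equiv.ofBijective _ hb).symm_apply_apply f

lemma coord_add (x y : T) :
    coord σ b hb (x + y) = coord σ b hb x + coord σ b hb y := by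
  apply hb.1
  rw [eps_coord, eps_add, eps_coord, eps_coord]

lemma coord_zero : coord σ b hb 0 = 0 := by
  apply hb.1; rw [eps_coord, eps_zero]

lemma coord_b (l : κ) : coord σ b hb (b l) = single l 1 := by
  apply hb.1; rw [eps_coord, eps_single, map_one, mul_one]

/-- The key coefficient identity. -/
lemma coord_mul (x y : T) (l : κ) :
    coord σ b hb (x * y * b l) =
      (coord σ b hb (y * b l)).sum fun m c =>
        mapRange (· * c) (zero_mul c) (coord σ b hb (x * b m)) := by
  apply hb.1
  rw [eps_coord]
  conv_rhs => rw [show eps σ b = ⇑(epsHom σ b) from rfl]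
  rw [map_finsuppSum]
  simp only [epsHom_apply, eps_mapRange_mul, eps_coord]
  have h2 : ((coord σ b hb (y * b l)).sum fun m c => x * b m * σ c)
      = x * ((coord σ b hb (y * b l)).sum fun m c => b m * σ c) := by
    rw [Finsupp.mul_sum]; simp [mul_assoc]
  rw [h2, show ((coord σ b hb (y * b l)).sum fun m c => b m * σ c)
      = eps σ b (coord σ b hb (y * b l)) from rfl, eps_coord, ← mul_assoc]

lemma coord_mul_apply (x y : T) (l n : κ) :
    coord σ b hb (x * y * b l) n =
      (coord σ b hb (y * b l)).sum fun m c => coord σ b hb (x * b m) n * c := by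
  rw [coord_mul, Finsupp.sum_apply]
  exact Finsupp.sum_congr fun m _ => by rw [mapRange_apply]

variable (P : Type u) [AddCommGroup P] [Module S P]

/-- Building block of the action of `T` on `κ →₀ P`. -/
noncomputable def gmap (t : T) (l : κ) : P →+ (κ →₀ P) where
  toFun p := mapRange (· • p) (zero_smul S p) (coord σ b hb (t * b l))
  map_zero' := by ext m; simp
  map_add' p q := by ext m; simp [smul_add]

/-- The action of `t : T` on `κ →₀ P` as an additive endomorphism. -/
noncomputable def rho (t : T) : AddMonoid.End (κ →₀ P) :=
  Finsupp.liftAddHom (gmap σ b hb P t)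

lemma rho_single (t : T) (l : κ) (p : P) :
    rho σ b hb P t (single l p) = mapRange (· • p) (zero_smul S p) (coord σ b hb (t * b l)) :=
  Finsupp.liftAddHom_apply_single _ _ _

lemma rho_single_apply (t : T) (l n : κ) (p : P) :
    rho σ b hb P t (single l p) n = coord σ b hb (t * b l) n • p := by
  rw [rho_single, mapRange_apply]

/-- The ring hom `T →+* AddMonoid.End (κ →₀ P)` giving the module structure. -/
noncomputable def rhoHom : T →+* AddMonoid.End (κ →₀ P) where
  toFun := rho σ b hb P
  map_one' := by
    refine AddMonoidHom.ext fun f => ?_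
    show rho σ b hb P 1 f = f
    induction f using Finsupp.induction_linear with
    | zero => simp
    | add f g hf hg => rw [map_add, hf, hg]
    | single l p => rw [rho_single, one_mul, coord_b, mapRange_single, one_smul]
  map_mul' x y := by
    refine AddMonoidHom.ext fun f => ?_
    show rho σ b hb P (x * y) f = rho σ b hb P x (rho σ b hb P y f)
    induction f using Finsupp.induction_linear with
    | zero => simp
    | add f g hf hg => rw [map_add, map_add, map_add, hf, hg]
    | single l p =>
      ext n
      rw [rho_single_apply, coord_mul_apply, rho_single]
      have h1 : rho σ b hb P x (mapRange (· • p) (zero_smul S p) (coord σ b hb (y * b l)))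
          = (coord σ b hb (y * b l)).sum fun m c =>
              mapRange (· • (c • p)) (zero_smul S _) (coord σ b hb (x * b m)) := by
        rw [show rho σ b hb P x (mapRange (· • p) (zero_smul S p) (coord σ b hb (y * b l)))
            = (mapRange (· • p) (zero_smul S p) (coord σ b hb (y * b l))).sum
                (fun m q => mapRange (· • q) (zero_smul S q) (coord σ b hb (x * b m))) from rfl]
        exact Finsupp.sum_mapRange_index (fun m => by ext j; simp)
      rw [h1, Finsupp.sum_apply]
      rw [show ((coord σ b hb (y * b l)).sum fun m c =>
            mapRange (· • (c • p)) (zero_smul S _) (coord σ b hb (x * b m)) n)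
          = (coord σ b hb (y * b l)).sum fun m c => (coord σ b hb (x * b m) n * c) • p from
        Finsupp.sum_congr fun m _ => by rw [mapRange_apply, mul_smul]]
      exact map_finsuppSum (AddMonoidHom.mk' (fun c : S => c • p) fun c d => add_smul c d p) _ _
  map_zero' := by
    refine AddMonoidHom.ext fun f => ?_
    show rho σ b hb P 0 f = 0
    induction f using Finsupp.induction_linear with
    | zero => simp
    | add f g hf hg => rw [map_add, hf, hg]; simp
    | single l p => rw [rho_single, zero_mul, coord_zero]; ext m; simp
  map_add' x y := by
    refine AddMonoidHom.ext fun f => ?_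
    show rho σ b hb P (x + y) f = rho σ b hb P x f + rho σ b hb P y f
    induction f using Finsupp.induction_linear with
    | zero => simp
    | add f g hf hg =>
      rw [map_add, map_add, map_add, hf, hg]; abel
    | single l p =>
      rw [rho_single, rho_single, rho_single, add_mul, coord_add]
      ext m; simp [add_smul]

/-- The module structure on `κ →₀ P` over `T`. -/
noncomputable def Fmod : Module T (κ →₀ P) :=
  Module.compHom _ (rhoHom σ b hb P)

lemma Fmod_smul_def (t : T) (f : κ →₀ P) :
    (letI := Fmod σ b hb P; t • f) = rho σ b hb P t f := rfl

section Maps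

variable {S T : Type u} [Ring S] [Ring T] (σ : S →+* T) {κ : Type u} (b : κ → T)
variable (hb : Function.Bijective (eps σ b))
variable {P Q : Type u} [AddCommGroup P] [Module S P] [AddCommGroup Q] [Module S Q]

/-- `Finsupp.mapRange` as a `T`-linear map. -/
noncomputable def Fmap (g : P →ₗ[S] Q) :
    letI := Fmod σ b hb P; letI := Fmod σ b hb Q; (κ →₀ P) →ₗ[T] (κ →₀ Q) :=
  letI := Fmod σ b hb P; letI := Fmod σ b hb Q
  { toFun := mapRange g (map_zero g)
    map_add' := fun f₁ f₂ => mapRange_add (map_add g) f₁ f₂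
    map_smul' := fun t f => by
      show mapRange g (map_zero g) (rho σ b hb P t f) = rho σ b hb Q t (mapRange g (map_zero g) f)
      induction f using Finsupp.induction_linear with
      | zero => simp
      | add f₁ f₂ h₁ h₂ =>
        rw [map_add (rho σ b hb P t), mapRange_add (map_add g), h₁, h₂,
          mapRange_add (map_add g), map_add]
      | single l p =>
        rw [mapRange_single]
        ext n
        rw [mapRange_apply, rho_single_apply, rho_single_apply, map_smul] }

lemma Fmap_apply (g : P →ₗ[S] Q) (f : κ →₀ P) :
    Fmap σ b hb g f = mapRange g (map_zero g) f := rfl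

lemma Fmap_surjective (g : P →ₗ[S] Q) (hg : Function.Surjective g) :
    Function.Surjective (Fmap σ b hb g) :=
  mapRange_surjective _ (map_zero g) hg

variable (r : ℕ)

/-- Underlying function of the comparison isomorphism for finite free modules. -/
noncomputable def psiFun (f : κ →₀ (Fin r → S)) : Fin r → T :=
  fun j => eps σ b (mapRange (fun v : Fin r → S => v j) rfl f)

lemma psiFun_add (f₁ f₂ : κ →₀ (Fin r → S)) :
    psiFun σ b r (f₁ + f₂) = psiFun σ b r f₁ + psiFun σ b r f₂ := by
  funext j
  show eps σ b (mapRange (fun v : Fin r → S => v j) rfl (f₁ + f₂)) = _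
  rw [mapRange_add (f := fun v : Fin r → S => v j) (fun v w => rfl) f₁ f₂, eps_add]; rfl

lemma psiFun_zero : psiFun σ b r 0 = 0 := by
  funext j
  show eps σ b (mapRange (fun v : Fin r → S => v j) rfl 0) = 0
  rw [mapRange_zero, eps_zero]

lemma psiFun_single (l : κ) (v : Fin r → S) :
    psiFun σ b r (single l v) = fun j => b l * σ (v j) := by
  funext j
  show eps σ b (mapRange (fun v : Fin r → S => v j) rfl (single l v)) = _
  rw [mapRange_single, eps_single]

lemma psiFun_smul (t : T) (f : κ →₀ (Fin r → S)) :
    psiFun σ b r (rho σ b hb (Fin r → S) t f) = t • psiFun σ b r f := by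
  induction f using Finsupp.induction_linear with
  | zero => rw [map_zero, psiFun_zero, smul_zero]
  | add f₁ f₂ h₁ h₂ =>
    rw [map_add, psiFun_add, h₁, h₂, psiFun_add, smul_add]
  | single l v =>
    funext j
    have h1 : mapRange (fun v : Fin r → S => v j) rfl (rho σ b hb (Fin r → S) t (single l v))
        = mapRange (· * v j) (zero_mul (v j)) (coord σ b hb (t * b l)) := by
      ext m
      rw [mapRange_apply, rho_single_apply, mapRange_apply, Pi.smul_apply, smul_eq_mul]
    show eps σ b (mapRange (fun v : Fin r → S => v j) rfl (rho σ b hb (Fin r → S) t (single l v))) = _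
    rw [h1, eps_mapRange_mul, eps_coord, psiFun_single, Pi.smul_apply, smul_eq_mul, mul_assoc]

open scoped Classical in
/-- Underlying function of the inverse comparison map. -/
noncomputable def psiInv (w : Fin r → T) : κ →₀ (Fin r → S) :=
  Finsupp.onFinset (Finset.univ.biUnion fun j => (coord σ b hb (w j)).support)
    (fun l => fun j => coord σ b hb (w j) l)
    (fun l hl => by
      obtain ⟨j, hj⟩ := Function.ne_iff.1 hl
      exact Finset.mem_biUnion.2 ⟨j, Finset.mem_univ j, Finsupp.mem_support_iff.2 hj⟩)

open scoped Classical in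
lemma mapRange_psiInv (w : Fin r → T) (j : Fin r) :
    mapRange (fun v : Fin r → S => v j) rfl (psiInv σ b hb r w) = coord σ b hb (w j) := by
  ext l; rfl

lemma psiFun_psiInv (w : Fin r → T) : psiFun σ b r (psiInv σ b hb r w) = w := by
  funext j
  show eps σ b (mapRange (fun v : Fin r → S => v j) rfl (psiInv σ b hb r w)) = w j
  rw [mapRange_psiInv, eps_coord]

lemma psiInv_psiFun (f : κ →₀ (Fin r → S)) : psiInv σ b hb r (psiFun σ b r f) = f := by
  apply Finsupp.ext; intro l
  funext j
  show coord σ b hb (eps σ b (mapRange (fun v : Fin r → S => v j) rfl f)) l = f l j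
  rw [coord_eps, mapRange_apply]

/-- The comparison isomorphism for finite free modules. -/
noncomputable def Psi :
    letI := Fmod σ b hb (Fin r → S); (κ →₀ (Fin r → S)) ≃ₗ[T] (Fin r → T) :=
  letI := Fmod σ b hb (Fin r → S)
  { toFun := psiFun σ b r
    invFun := psiInv σ b hb r
    left_inv := psiInv_psiFun σ b hb r
    right_inv := psiFun_psiInv σ b hb r
    map_add' := psiFun_add σ b r
    map_smul' := psiFun_smul σ b hb r }

lemma Psi_apply (f : κ →₀ (Fin r → S)) : Psi σ b hb r f = psiFun σ b r f := rfl

/-- `κ →₀ P` is a finite `T`-module when `P` is a finite `S`-module. -/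
lemma Ffinite [Module.Finite S P] :
    letI := Fmod σ b hb P; Module.Finite T (κ →₀ P) := by
  letI := Fmod σ b hb P
  obtain ⟨r, g, hg⟩ := Module.Finite.exists_fin' S P
  letI := Fmod σ b hb (Fin r → S)
  exact Module.Finite.of_surjective
    ((Fmap σ b hb g).comp (Psi σ b hb r).symm.toLinearMap)
    (by
      rw [LinearMap.coe_comp]
      exact (Fmap_surjective σ b hb g hg).comp (Psi σ b hb r).symm.surjective)

/-- `κ →₀ P` is projective over `T` when `P` is f.g. projective over `S`. -/
lemma Fprojective [Module.Finite S P] [Module.Projective S P] :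
    letI := Fmod σ b hb P; Module.Projective T (κ →₀ P) := by
  letI := Fmod σ b hb P
  obtain ⟨r, g, hg⟩ := Module.Finite.exists_fin' S P
  letI := Fmod σ b hb (Fin r → S)
  obtain ⟨s, hs⟩ := Module.projective_lifting_property g LinearMap.id hg
  refine Module.Projective.of_split
    ((Psi σ b hb r).toLinearMap.comp (Fmap σ b hb s))
    ((Fmap σ b hb g).comp (Psi σ b hb r).symm.toLinearMap) ?_
  apply LinearMap.ext
  intro f
  simp only [LinearMap.comp_apply, LinearEquiv.coe_coe, LinearEquiv.symm_apply_apply]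
  rw [Fmap_apply, Fmap_apply]
  ext l
  rw [mapRange_apply, mapRange_apply]
  have := LinearMap.ext_iff.1 hs (f l)
  simpa using this

lemma Fker_zero (g : P →ₗ[S] Q) (f : κ →₀ P) (hf : ∀ l, f l ∈ LinearMap.ker g) :
    Fmap σ b hb g f = 0 := by
  rw [Fmap_apply]; ext l
  rw [mapRange_apply]
  exact hf l

/-- The kernel of `Fmap g` is `κ →₀ ker g`. -/
noncomputable def kerEquiv (g : P →ₗ[S] Q) :
    letI := Fmod σ b hb (↥(LinearMap.ker g)); letI := Fmod σ b hb P; letI := Fmod σ b hb Q;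
    (κ →₀ ↥(LinearMap.ker g)) ≃ₗ[T] ↥(LinearMap.ker (Fmap σ b hb g)) := by
  letI := Fmod σ b hb (↥(LinearMap.ker g)); letI := Fmod σ b hb P; letI := Fmod σ b hb Q
  refine LinearEquiv.ofBijective
    (LinearMap.codRestrict _ (Fmap σ b hb (LinearMap.ker g).subtype) fun f => ?_) ⟨?_, ?_⟩
  · rw [LinearMap.mem_ker]
    rw [show Fmap σ b hb g (Fmap σ b hb (LinearMap.ker g).subtype f)
        = mapRange g (map_zero g)
            (mapRange (LinearMap.ker g).subtype (map_zero _) f) from rfl]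
    ext l
    rw [mapRange_apply, mapRange_apply]
    exact (f l).2
  · intro f₁ f₂ h
    have h2 : Fmap σ b hb (LinearMap.ker g).subtype f₁
        = Fmap σ b hb (LinearMap.ker g).subtype f₂ := congrArg Subtype.val h
    rw [Fmap_apply, Fmap_apply] at h2
    exact mapRange_injective _ _ (Submodule.injective_subtype _) h2
  · rintro ⟨f, hf⟩
    have hf' : ∀ l, g (f l) = 0 := by
      intro l
      have h3 := LinearMap.mem_ker.1 hf
      rw [Fmap_apply] at h3
      have h4 := Finsupp.ext_iff.1 h3 l
      rwa [mapRange_apply, Finsupp.zero_apply] at h4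
    refine ⟨Finsupp.onFinset f.support
      (fun l => (⟨f l, LinearMap.mem_ker.2 (hf' l)⟩ : ↥(LinearMap.ker g)))
      (fun l hl => Finsupp.mem_support_iff.2 fun h0 => hl (Subtype.ext h0)), ?_⟩
    apply Subtype.ext
    rw [LinearMap.codRestrict_apply, Fmap_apply]
    ext l
    rw [mapRange_apply]
    rfl

end Maps

end FreeBC

/-- `M` admits a resolution `0 → C_n → ⋯ → C_0 → M → 0` of length `n`
by finitely generated projective `A`-modules. -/
def HasFGProjResOfLength (A : Type u) [Ring A] :
    ℕ → (M : Type u) → (iM : AddCommGroup M) → @Module A M _ iM.toAddCommMonoid → Prop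
  | 0, M, iM, mM =>
      letI := iM; letI := mM
      Module.Finite A M ∧ Module.Projective A M
  | n + 1, M, iM, mM =>
      letI := iM; letI := mM
      ∃ (C : Type u) (_ : AddCommGroup C) (_ : Module A C) (π : C →ₗ[A] M),
        Module.Finite A C ∧ Module.Projective A C ∧ Function.Surjective π ∧
        HasFGProjResOfLength A n ↥(LinearMap.ker π) inferInstance inferInstance

/-- `M` admits a finite resolution `0 → C_n → ⋯ → C_0 → M → 0` by
finitely generated projective `A`-modules. -/
def HasFiniteFGProjResolution (A : Type u) [Ring A] (M : Type u) [iM : AddCommGroup M]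
    [mM : Module A M] : Prop :=
  ∃ n, HasFGProjResOfLength A n M iM mM

/-- A ring `A` is right regular coherent if every finitely presented right `A`-module
(i.e. `Aᵐᵒᵖ`-module) admits a finite resolution by finitely generated projective
right `A`-modules. -/
def RightRegularCoherentRing (A : Type u) [Ring A] : Prop :=
  ∀ (M : Type u) (_iM : AddCommGroup M) (_mM : Module Aᵐᵒᵖ M),
    Module.FinitePresentation Aᵐᵒᵖ M → HasFiniteFGProjResolution Aᵐᵒᵖ M

/-- A ring `A` is right regular Noetherian if it is right Noetherian and every finitely
generated right `A`-module admits a finite resolution by finitely generated projective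
right `A`-modules. -/
def RightRegularNoetherianRing (A : Type u) [Ring A] : Prop :=
  IsNoetherianRing Aᵐᵒᵖ ∧
    ∀ (M : Type u) (_iM : AddCommGroup M) (_mM : Module Aᵐᵒᵖ M),
      Module.Finite Aᵐᵒᵖ M → HasFiniteFGProjResolution Aᵐᵒᵖ M

/-- A group `G` is regular coherent if for every right regular Noetherian ring `R`
the group ring `R[G]` is right regular coherent. -/
def RegularCoherentGroup (G : Type v) [Group G] : Prop :=
  ∀ (R : Type w) [Ring R], RightRegularNoetherianRing R →
    RightRegularCoherentRing (MonoidAlgebra R G)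

/-- A group `G` is regular Noetherian if for every right regular Noetherian ring `R`
the group ring `R[G]` is right regular Noetherian. -/
def RegularNoetherianGroup (G : Type v) [Group G] : Prop :=
  ∀ (R : Type w) [Ring R], RightRegularNoetherianRing R →
    RightRegularNoetherianRing (MonoidAlgebra R G)

section Transport

/-- `HasFGProjResOfLength` is invariant under linear equivalence. -/
theorem hasFGProjResOfLength_congr {A : Type u} [Ring A] :
    ∀ (n : ℕ) (M N : Type u) [iM : AddCommGroup M] [mM : Module A M]
      [iN : AddCommGroup N] [mN : Module A N],
      (M ≃ₗ[A] N) → HasFGProjResOfLength A n M iM mM → HasFGProjResOfLength A n N iN mN := by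
  intro n
  induction n with
  | zero =>
    intro M N iM mM iN mN e h
    obtain ⟨h1, h2⟩ := h
    exact ⟨Module.Finite.equiv e, Module.Projective.of_equiv e⟩
  | succ n ih =>
    intro M N iM mM iN mN e h
    obtain ⟨C, iC, mC, π, h1, h2, h3, h4⟩ := h
    refine ⟨C, iC, mC, e.toLinearMap.comp π, h1, h2, ?_, ?_⟩
    · rw [LinearMap.coe_comp, LinearEquiv.coe_coe]
      exact e.surjective.comp h3
    · have hker : LinearMap.ker (e.toLinearMap.comp π) = LinearMap.ker π := by
        rw [LinearMap.ker_comp, LinearEquiv.ker, Submodule.comap_bot]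
      exact ih _ _ (LinearEquiv.ofEq _ _ hker.symm) h4

end Transport

namespace FreeBC

section Res

variable {S T : Type u} [Ring S] [Ring T] (σ : S →+* T) {κ : Type u} (b : κ → T)
variable (hb : Function.Bijective (eps σ b))

/-- Base change of a finite resolution by f.g. projectives along a free ring extension. -/
theorem Fres : ∀ (m : ℕ) (P : Type u) (iP : AddCommGroup P)
    (mP : @Module S P _ iP.toAddCommMonoid),
    HasFGProjResOfLength S m P iP mP →
    HasFGProjResOfLength T m (κ →₀ P) inferInstance (Fmod σ b hb P) := by
  intro m
  induction m with
  | zero =>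
    intro P iP mP h
    letI := iP; letI := mP
    obtain ⟨h1, h2⟩ := h
    letI := Fmod σ b hb P
    haveI := h1; haveI := h2
    exact ⟨Ffinite σ b hb, Fprojective σ b hb⟩
  | succ m ih =>
    intro P iP mP h
    letI := iP; letI := mP
    obtain ⟨C, iC, mC, π, h1, h2, h3, h4⟩ := h
    letI := iC; letI := mC
    letI := Fmod σ b hb P; letI := Fmod σ b hb C
    letI := Fmod σ b hb (↥(LinearMap.ker π))
    haveI := h1; haveI := h2
    refine ⟨κ →₀ C, inferInstance, Fmod σ b hb C, Fmap σ b hb π,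
      Ffinite σ b hb, Fprojective σ b hb, Fmap_surjective σ b hb π h3, ?_⟩
    have h5 := ih (↥(LinearMap.ker π)) inferInstance inferInstance h4
    exact hasFGProjResOfLength_congr m _ _ (kerEquiv σ b hb π) h5

end Res

end FreeBC

theorem rightRegularCoherent_of_directed_union_subrings'
    {A : Type u} [Ring A] {ι : Type v} [Nonempty ι]
    (S : ι → Subring A) (hdir : Directed (· ≤ ·) S)
    (hunion : ∀ a : A, ∃ i, a ∈ S i)
    (hcoh : ∀ i, RightRegularCoherentRing ↥(S i))
    (hfree : ∀ i, Module.Free ↥(S i) A) :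
    RightRegularCoherentRing A := by
  classical
  intro M iM mM hfp
  haveI := hfp
  haveI : Module.Finite Aᵐᵒᵖ M := inferInstance
  obtain ⟨n, π, hπ⟩ := Module.Finite.exists_fin' Aᵐᵒᵖ M
  have hkfg : (LinearMap.ker π).FG := Module.FinitePresentation.fg_ker π hπ
  obtain ⟨m, v, hv⟩ := Submodule.fg_iff_exists_fin_generating_family.1 hkfg
  -- find a common subring containing all matrix entries
  have hex : ∀ p : Fin m × Fin n, ∃ i, MulOpposite.unop (v p.1 p.2) ∈ S i :=
    fun p => hunion _
  choose idx hidx using hex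
  obtain ⟨z, hz⟩ := hdir.finset_le ((Finset.univ : Finset (Fin m × Fin n)).image idx)
  have hvz : ∀ t j, MulOpposite.unop (v t j) ∈ S z := fun t j =>
    hz (idx (t, j)) (Finset.mem_image.2 ⟨(t, j), Finset.mem_univ _, rfl⟩) (hidx (t, j))
  -- set up the base change data
  set B := ↥(S z) with hB
  let σ : Bᵐᵒᵖ →+* Aᵐᵒᵖ := RingHom.op (S z).subtype
  obtain ⟨⟨κ, bb⟩⟩ := Module.Free.exists_basis (R := B) (M := A)
  let b : κ → Aᵐᵒᵖ := fun l => MulOpposite.op (bb l)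
  have hcompat : ∀ f : κ →₀ Bᵐᵒᵖ, FreeBC.eps σ b f
      = MulOpposite.op (bb.repr.symm (Finsupp.mapRange MulOpposite.unop rfl f)) := by
    intro f
    induction f using Finsupp.induction_linear with
    | zero => rw [FreeBC.eps_zero, Finsupp.mapRange_zero, map_zero, MulOpposite.op_zero]
    | add f g hf hg =>
      rw [FreeBC.eps_add, hf, hg, Finsupp.mapRange_add (fun a b => rfl), map_add,
        MulOpposite.op_add]
    | single l c =>
      rw [FreeBC.eps_single, Finsupp.mapRange_single, Module.Basis.repr_symm_single]
      rfl
  have hb : Function.Bijective (FreeBC.eps σ b) := by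
    constructor
    · intro f g h
      rw [hcompat, hcompat] at h
      have h2 := MulOpposite.op_injective h
      have h3 := bb.repr.symm.injective h2
      exact Finsupp.mapRange_injective _ _ MulOpposite.unop_injective h3
    · intro t
      refine ⟨Finsupp.mapRange MulOpposite.op rfl (bb.repr (MulOpposite.unop t)), ?_⟩
      rw [hcompat]
      have : Finsupp.mapRange MulOpposite.unop rfl
          (Finsupp.mapRange MulOpposite.op rfl (bb.repr (MulOpposite.unop t)))
          = bb.repr (MulOpposite.unop t) := by
        ext l; rw [Finsupp.mapRange_apply, Finsupp.mapRange_apply, MulOpposite.unop_op]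
      rw [this, LinearEquiv.symm_apply_apply, MulOpposite.op_unop]
  -- the descent of the presentation
  let w : Fin m → (Fin n → Bᵐᵒᵖ) := fun t j =>
    MulOpposite.op (⟨MulOpposite.unop (v t j), hvz t j⟩ : B)
  have hw : ∀ t j, σ (w t j) = v t j := fun t j => rfl
  set K₀ : Submodule Bᵐᵒᵖ (Fin n → Bᵐᵒᵖ) := Submodule.span Bᵐᵒᵖ (Set.range w) with hK₀
  have hNfp : Module.FinitePresentation Bᵐᵒᵖ ((Fin n → Bᵐᵒᵖ) ⧸ K₀) :=
    Module.finitePresentation_of_free_of_surjective K₀.mkQ (Submodule.mkQ_surjective _)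
      (by rw [Submodule.ker_mkQ]; exact Submodule.fg_span (Set.finite_range w))
  obtain ⟨mres, hres⟩ := hcoh z ((Fin n → Bᵐᵒᵖ) ⧸ K₀) inferInstance inferInstance hNfp
  have hres2 := FreeBC.Fres σ b hb mres ((Fin n → Bᵐᵒᵖ) ⧸ K₀) inferInstance inferInstance hres
  -- the comparison map q
  letI := FreeBC.Fmod σ b hb ((Fin n → Bᵐᵒᵖ) ⧸ K₀)
  letI := FreeBC.Fmod σ b hb (Fin n → Bᵐᵒᵖ)
  let q : (Fin n → Aᵐᵒᵖ) →ₗ[Aᵐᵒᵖ] (κ →₀ ((Fin n → Bᵐᵒᵖ) ⧸ K₀)) :=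
    (FreeBC.Fmap σ b hb K₀.mkQ).comp (FreeBC.Psi σ b hb n).symm.toLinearMap
  have hq : Function.Surjective q := by
    rw [LinearMap.coe_comp, LinearEquiv.coe_coe]
    exact (FreeBC.Fmap_surjective σ b hb _ (Submodule.mkQ_surjective _)).comp
      (FreeBC.Psi σ b hb n).symm.surjective
  have haux : ∀ u ∈ K₀, ∀ x : Aᵐᵒᵖ,
      (fun j => x * σ (u j)) ∈ Submodule.span Aᵐᵒᵖ (Set.range v) := by
    intro u hu
    induction hu using Submodule.span_induction with
    | mem u hu =>
      obtain ⟨t, rfl⟩ := hu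
      intro x
      have hfun : (fun j => x * σ (w t j)) = x • v t :=
        funext fun j => by rw [hw, Pi.smul_apply, smul_eq_mul]
      rw [hfun]
      exact Submodule.smul_mem _ _ (Submodule.subset_span ⟨t, rfl⟩)
    | zero =>
      intro x
      have hfun : (fun j => x * σ ((0 : Fin n → Bᵐᵒᵖ) j)) = 0 :=
        funext fun j => by simp
      rw [hfun]; exact Submodule.zero_mem _
    | add u₁ u₂ _ _ ih₁ ih₂ =>
      intro x
      have hfun : (fun j => x * σ ((u₁ + u₂) j))
          = (fun j => x * σ (u₁ j)) + fun j => x * σ (u₂ j) :=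
        funext fun j => by simp [mul_add]
      rw [hfun]; exact Submodule.add_mem _ (ih₁ x) (ih₂ x)
    | smul c u _ ih =>
      intro x
      have hfun : (fun j => x * σ ((c • u) j)) = fun j => (x * σ c) * σ (u j) :=
        funext fun j => by rw [Pi.smul_apply, smul_eq_mul, map_mul, mul_assoc]
      rw [hfun]; exact ih (x * σ c)
  have hkerq : LinearMap.ker q = LinearMap.ker π := by
    rw [← hv]
    apply le_antisymm
    · intro x hx
      have hfK : ∀ l, (FreeBC.Psi σ b hb n).symm x l ∈ K₀ := by
        intro l
        have h0 : FreeBC.Fmap σ b hb K₀.mkQ ((FreeBC.Psi σ b hb n).symm x) = 0 :=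
          LinearMap.mem_ker.1 hx
        have h2 := Finsupp.ext_iff.1 h0 l
        rw [FreeBC.Fmap_apply, Finsupp.mapRange_apply, Finsupp.zero_apply,
          Submodule.mkQ_apply, Submodule.Quotient.mk_eq_zero] at h2
        exact h2
      have hx2 : x = ((FreeBC.Psi σ b hb n).symm x).sum
          fun l u => FreeBC.Psi σ b hb n (Finsupp.single l u) := by
        conv_lhs => rw [← (FreeBC.Psi σ b hb n).apply_symm_apply x,
          ← Finsupp.sum_single ((FreeBC.Psi σ b hb n).symm x)]
        exact map_finsuppSum _ _ _
      rw [hx2]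
      apply Submodule.finsuppSum_mem
      intro l _
      have hps : FreeBC.Psi σ b hb n (Finsupp.single l ((FreeBC.Psi σ b hb n).symm x l))
          = fun j => b l * σ ((FreeBC.Psi σ b hb n).symm x l j) :=
        FreeBC.psiFun_single σ b n l _
      rw [hps]
      exact haux _ (hfK l) (b l)
    · rw [Submodule.span_le]
      rintro x ⟨t, rfl⟩
      have hPsif : FreeBC.Psi σ b hb n
          (Finsupp.mapRange (· • w t) (zero_smul _ _) (FreeBC.coord σ b hb 1)) = v t := by
        funext j
        show FreeBC.eps σ b (Finsupp.mapRange (fun u : Fin n → Bᵐᵒᵖ => u j) rfl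
          (Finsupp.mapRange (· • w t) (zero_smul _ _) (FreeBC.coord σ b hb 1))) = v t j
        have hmr : Finsupp.mapRange (fun u : Fin n → Bᵐᵒᵖ => u j) rfl
            (Finsupp.mapRange (· • w t) (zero_smul _ _) (FreeBC.coord σ b hb 1))
            = Finsupp.mapRange (· * w t j) (zero_mul _) (FreeBC.coord σ b hb 1) := by
          ext l
          rw [Finsupp.mapRange_apply, Finsupp.mapRange_apply, Finsupp.mapRange_apply,
            Pi.smul_apply, smul_eq_mul]
        rw [hmr, FreeBC.eps_mapRange_mul, FreeBC.eps_coord, hw, one_mul]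
      have hsymm : (FreeBC.Psi σ b hb n).symm (v t)
          = Finsupp.mapRange (· • w t) (zero_smul _ _) (FreeBC.coord σ b hb 1) := by
        rw [← hPsif, LinearEquiv.symm_apply_apply]
      show (FreeBC.Fmap σ b hb K₀.mkQ) ((FreeBC.Psi σ b hb n).symm (v t)) = 0
      rw [hsymm]
      apply FreeBC.Fker_zero
      intro l
      rw [Submodule.ker_mkQ, Finsupp.mapRange_apply]
      exact Submodule.smul_mem _ _ (Submodule.subset_span ⟨t, rfl⟩)
  have e : M ≃ₗ[Aᵐᵒᵖ] (κ →₀ ((Fin n → Bᵐᵒᵖ) ⧸ K₀)) :=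
    ((LinearMap.quotKerEquivOfSurjective π hπ).symm.trans
      (Submodule.quotEquivOfEq _ _ hkerq.symm)).trans
      (LinearMap.quotKerEquivOfSurjective q hq)
  exact ⟨mres, hasFGProjResOfLength_congr mres _ _ e.symm hres2⟩


/-- Let `A` be a ring and `(A_i)` a nonempty directed family of subrings
whose union is `A`.  If each `A_i` is right regular coherent and `A` is free as a left
`A_i`-module for each `i`, then `A` is right regular coherent. -/

theorem rightRegularCoherent_of_directed_union_subrings
    {A : Type u} [Ring A] {ι : Type v} [Nonempty ι]
    (S : ι → Subring A) (hdir : Directed (· ≤ ·) S)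
    (hunion : ∀ a : A, ∃ i, a ∈ S i)
    (hcoh : ∀ i, RightRegularCoherentRing ↥(S i))
    (hfree : ∀ i, Module.Free ↥(S i) A) :
    RightRegularCoherentRing A :=
  rightRegularCoherent_of_directed_union_subrings' S hdir hunion hcoh hfree
end

section
/- Let A be a ring and (A_i)_{i∈I} a nonempty family of subrings of A that is directed by inclusion and satisfies A = ⋃_{i∈I} A_i. Then for every finitely presented right A-module M there exist an index i ∈ I, natural numbers m and k, and a k × m matrix with all entries in A_i, such that M is isomorphic to the cokernel of the right A-linear map A^m → A^k given by left multiplication by this matrix. -/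
/-! A presentation of `M` yields a matrix whose columns generate the module of relations. Only
finitely many entries occur, and since the family is directed they all lie in one `A_i`. -/

universe u v

open MulOpposite

/-- The right `A`-linear map `A^m → A^k` given by left multiplication by the
`k × m` matrix `T`; here right `A`-modules are `Aᵐᵒᵖ`-modules. -/
def Matrix.leftMulVecLin {A : Type u} [Ring A] {k m : ℕ} (T : Matrix (Fin k) (Fin m) A) :
    (Fin m → A) →ₗ[Aᵐᵒᵖ] (Fin k → A) where
  toFun v := fun j => ∑ l, T j l * v l
  map_add' v w := by
    funext j
    simp [mul_add, Finset.sum_add_distrib]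
  map_smul' c v := by
    funext j
    simp only [Pi.smul_apply, MulOpposite.smul_eq_mul_unop, RingHom.id_apply]
    rw [Finset.sum_mul]
    simp [mul_assoc]

def MulOpposite.unopLinearEquiv (A : Type*) [Semiring A] : Aᵐᵒᵖ ≃ₗ[Aᵐᵒᵖ] A where
  toEquiv := opEquiv.symm
  map_add' := unop_add
  map_smul' := unop_mul

theorem Directed.exists_forall_mem_of_finite {α ι κ σ : Type*} [SetLike σ α] [Preorder σ]
    [IsConcreteLE σ α] [Nonempty ι] [Finite κ] {S : ι → σ} (hS : Directed (· ≤ ·) S)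
    {x : κ → α} (hx : ∀ j, ∃ i, x j ∈ S i) : ∃ i, ∀ j, x j ∈ S i := by
  classical
  choose idx hidx using hx
  have := Fintype.ofFinite κ
  obtain ⟨i, hi⟩ := hS.finset_le (Finset.univ.image idx)
  exact ⟨i, fun j =>
    SetLike.le_def.mp (hi _ (Finset.mem_image_of_mem idx (Finset.mem_univ j))) (hidx j)⟩

theorem Matrix.range_leftMulVecLin {A : Type*} [Ring A] {k m : ℕ} (T : Matrix (Fin k) (Fin m) A) :
    LinearMap.range T.leftMulVecLin = Submodule.span Aᵐᵒᵖ (Set.range fun l j => T j l) := by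
  ext x
  rw [LinearMap.mem_range, Submodule.mem_span_range_iff_exists_fun]
  have h (v : Fin m → A) : T.leftMulVecLin v = ∑ l, op (v l) • fun j => T j l := by
    ext j
    simp [Matrix.leftMulVecLin, Finset.sum_apply, smul_eq_mul_unop]
  constructor
  · rintro ⟨v, rfl⟩
    exact ⟨fun l => op (v l), (h v).symm⟩
  · rintro ⟨c, rfl⟩
    exact ⟨fun l => unop (c l), h _⟩

theorem Module.FinitePresentation.exists_linearEquiv_quotient_range_leftMulVecLin
    {A M : Type*} [Ring A] [AddCommGroup M] [Module Aᵐᵒᵖ M] [Module.FinitePresentation Aᵐᵒᵖ M] :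
    ∃ (k m : ℕ) (T : Matrix (Fin k) (Fin m) A),
      Nonempty (M ≃ₗ[Aᵐᵒᵖ] (Fin k → A) ⧸ LinearMap.range T.leftMulVecLin) := by
  obtain ⟨k, K, eK, hK⟩ := Module.FinitePresentation.exists_fin Aᵐᵒᵖ M
  let e : (Fin k → Aᵐᵒᵖ) ≃ₗ[Aᵐᵒᵖ] (Fin k → A) :=
    LinearEquiv.piCongrRight fun _ => unopLinearEquiv A
  obtain ⟨m, g, hg⟩ := Submodule.fg_iff_exists_fin_generating_family.mp (hK.map e.toLinearMap)
  refine ⟨k, m, Matrix.of fun j l => g l j, ⟨eK.trans (Submodule.Quotient.equiv K _ e ?_)⟩⟩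
  rw [Matrix.range_leftMulVecLin, ← hg]
  rfl

theorem finitePresentation_matrix_entries_in_directed_union_general
    {A : Type u} [Ring A] {ι : Type v}
    (S : ι → Subring A) (hdir : Directed (· ≤ ·) S)
    (hunion : ∀ a : A, ∃ i, a ∈ S i)
    (M : Type u) [AddCommGroup M] [Module Aᵐᵒᵖ M]
    (hM : Module.FinitePresentation Aᵐᵒᵖ M) :
    ∃ (i : ι) (k m : ℕ) (T : Matrix (Fin k) (Fin m) A),
      (∀ j l, T j l ∈ S i) ∧
      Nonempty (M ≃ₗ[Aᵐᵒᵖ] ((Fin k → A) ⧸ LinearMap.range (Matrix.leftMulVecLin T))) := by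
  obtain ⟨k, m, T, hT⟩ := hM.exists_linearEquiv_quotient_range_leftMulVecLin
  have : Nonempty ι := ⟨(hunion 0).choose⟩
  obtain ⟨i, hi⟩ := hdir.exists_forall_mem_of_finite (x := fun p : Fin k × Fin m => T p.1 p.2)
    fun _ => hunion _
  exact ⟨i, k, m, T, fun j l => hi (j, l), hT⟩

/-- If `A` is the union of a nonempty directed family of subrings `(A_i)`,
then every finitely presented right `A`-module is isomorphic to the cokernel of left
multiplication by a matrix all of whose entries lie in some `A_i`. -/
theorem finitePresentation_matrix_entries_in_directed_union
    {A : Type u} [Ring A] {ι : Type v} [Nonempty ι]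
    (S : ι → Subring A) (hdir : Directed (· ≤ ·) S)
    (hunion : ∀ a : A, ∃ i, a ∈ S i)
    (M : Type u) [AddCommGroup M] [Module Aᵐᵒᵖ M]
    (hM : Module.FinitePresentation Aᵐᵒᵖ M) :
    ∃ (i : ι) (k m : ℕ) (T : Matrix (Fin k) (Fin m) A),
      (∀ j l, T j l ∈ S i) ∧
      Nonempty (M ≃ₗ[Aᵐᵒᵖ] ((Fin k → A) ⧸ LinearMap.range (Matrix.leftMulVecLin T))) :=
  finitePresentation_matrix_entries_in_directed_union_general S hdir hunion M hM
end

section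
/- Let I be a finite set with at least two elements. Then there exists a sequence (J_n, j_n)_{n≥0} such that: J₀ = I; for every n ≥ 0, J_n is a subset of W(I), j_n is an element of J_n, and J_{n+1} = Z(J_n, j_n); the set Y = {j₀, j₁, j₂, …} is an admissible subset of W(I); and for every integer p > 0 there exists m ≥ 0 such that |u| > p for all n > m and all u ∈ J_n. -/
/-- The "cyclic word" relation on the free monoid `W(I)`: `uv ∼ vu`.  The set of cyclic
words `CW(I)` is the quotient of `W(I)` by the equivalence relation generated by it. -/
def CyclicRel (I : Type*) (u v : FreeMonoid I) : Prop :=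
  ∃ a b : FreeMonoid I, u = a * b ∧ v = b * a

/-- The set `CW(I)` of cyclic words in `I`. -/
def CyclicWord (I : Type*) := Quot (CyclicRel I)

/-- A word `u ∈ W(I)` is reduced if `u ≠ vᵖ` for every word `v` and every integer `p > 1`. -/
def IsReducedWord {I : Type*} (u : FreeMonoid I) : Prop :=
  ∀ (v : FreeMonoid I) (p : ℕ), 1 < p → u ≠ v ^ p

/-- The image `CW₀(I)` of the set of reduced words in `CW(I)`. -/
def reducedCyclicWords (I : Type*) : Set (CyclicWord I) :=
  Quot.mk (CyclicRel I) '' {u | IsReducedWord u}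

/-- A subset `X ⊆ W(I)` is admissible if the projection `W(I) → CW(I)` restricts to a
bijection from `X` onto `CW₀(I)`. -/
def IsAdmissible {I : Type*} (X : Set (FreeMonoid I)) : Prop :=
  Set.BijOn (Quot.mk (CyclicRel I)) X (reducedCyclicWords I)

/-- For `J ⊆ W(I)` and `j ∈ J`, the set `Z(J, j) = { jᵖ j′ : p ≥ 0, j′ ∈ J, j′ ≠ j }`. -/
def Zset {I : Type*} (J : Set (FreeMonoid I)) (j : FreeMonoid I) : Set (FreeMonoid I) :=
  {u | ∃ (p : ℕ) (j' : FreeMonoid I), j' ∈ J ∧ j' ≠ j ∧ u = j ^ p * j'}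

namespace AdmSeq

open List

variable {I : Type}

/-! ### sums of lengths -/

def sumlen (L : List (List I)) : ℕ := (L.map length).sum

@[simp] lemma sumlen_nil : sumlen ([] : List (List I)) = 0 := rfl

@[simp] lemma sumlen_cons (x : List I) (L : List (List I)) :
    sumlen (x :: L) = x.length + sumlen L := by simp [sumlen]

@[simp] lemma sumlen_append (L M : List (List I)) :
    sumlen (L ++ M) = sumlen L + sumlen M := by simp [sumlen]

lemma length_flatten'' (L : List (List I)) : L.flatten.length = sumlen L := by
  simp [sumlen]

@[simp] lemma sumlen_replicate (p : ℕ) (v : List I) :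
    sumlen (replicate p v) = p * v.length := by
  simp [sumlen]

lemma sumlen_take_le (L : List (List I)) (s : ℕ) : sumlen (L.take s) ≤ sumlen L := by
  conv_rhs => rw [← take_append_drop s L]
  rw [sumlen_append]; exact Nat.le_add_right _ _

lemma flatten_rotate (L : List (List I)) (s : ℕ) (hs : s ≤ L.length) :
    (L.rotate s).flatten = L.flatten.rotate (sumlen (L.take s)) := by
  have h1 : L.flatten = (L.take s).flatten ++ (L.drop s).flatten := by
    conv_lhs => rw [← take_append_drop s L]
    rw [flatten_append]
  rw [rotate_eq_drop_append_take hs, flatten_append, h1,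
    rotate_eq_drop_append_take (by simp only [length_append, length_flatten'', ← sumlen_append, take_append_drop]; exact sumlen_take_le L s),
    drop_left' (by rw [length_flatten'']), take_left' (by rw [length_flatten''])]

lemma isRotated_flatten_rotate (L : List (List I)) (s : ℕ) (hs : s ≤ L.length) :
    L.flatten ~r (L.rotate s).flatten :=
  ⟨sumlen (L.take s), (flatten_rotate L s hs).symm⟩

lemma sumlen_take_lt (L : List (List I)) (h : ∀ x ∈ L, x ≠ []) {s : ℕ}
    (hs : s < L.length) : sumlen (L.take s) < sumlen L := by
  conv_rhs => rw [← take_append_drop s L]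
  rw [sumlen_append]
  have hd : L.drop s ≠ [] := by
    intro he
    have := congrArg List.length he
    simp at this
    omega
  obtain ⟨x, t, hxt⟩ := List.exists_cons_of_ne_nil hd
  have hx : x ∈ L := mem_of_mem_drop (by rw [hxt]; exact mem_cons_self)
  have : 1 ≤ x.length := by
    have := h x hx
    cases hxe : x with
    | nil => exact absurd hxe this
    | cons a b => simp [hxe]
  rw [hxt, sumlen_cons]
  omega

/-! ### powers and rotation -/

lemma flatten_replicate_append (m : ℕ) (c d : List I) :
    (replicate m (c ++ d)).flatten ++ c = c ++ (replicate m (d ++ c)).flatten := by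
  induction m with
  | zero => simp
  | succ m ih =>
    rw [replicate_succ, flatten_cons, replicate_succ, flatten_cons]
    rw [append_assoc, append_assoc, ih, ← append_assoc, ← append_assoc, ← append_assoc,
      append_assoc c d c]

lemma flatten_replicate_rotate (m : ℕ) (v : List I) {b : ℕ} (hb : b ≤ v.length) :
    ((replicate m v).flatten).rotate b = (replicate m (v.rotate b)).flatten := by
  cases m with
  | zero => simp
  | succ m =>
    set c := v.take b with hc
    set d := v.drop b with hd
    have hcd : v = c ++ d := (take_append_drop b v).symm
    have hlc : c.length = b := by simp [hc, hb]
    have hrot : v.rotate b = d ++ c := by rw [rotate_eq_drop_append_take hb]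
    have h1 : (replicate (m+1) v).flatten = c ++ (d ++ (replicate m v).flatten) := by
      rw [replicate_succ, flatten_cons]
      conv_rhs => rw [← append_assoc, ← hcd]
    rw [h1, ← hlc, rotate_append_length_eq]
    have h2 : (replicate (m+1) (c ++ d)).flatten ++ c = c ++ (replicate (m+1) (d ++ c)).flatten :=
      flatten_replicate_append (m+1) c d
    rw [← hcd] at h2
    rw [hlc, hrot]
    have h3 : (replicate (m+1) v).flatten ++ c = c ++ ((d ++ (replicate m v).flatten) ++ c) := by
      rw [h1]; simp [append_assoc]
    rw [h3] at h2
    exact (append_cancel_left h2.symm).symm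

lemma rotate_eq_self_of_rotate_eq (F : List I) (d : ℕ) (h : F.rotate d = F) :
    ∀ (q b : ℕ), F.rotate (q * d + b) = F.rotate b := by
  intro q
  induction q with
  | zero => simp
  | succ q ih =>
    intro b
    have : (q + 1) * d + b = d + (q * d + b) := by ring
    rw [this, ← rotate_rotate, h, ih]

/-! ### cyclic relation and rotation -/

lemma cyclicRel_iff (u v : FreeMonoid I) :
    CyclicRel I u v ↔ FreeMonoid.toList u ~r FreeMonoid.toList v := by
  constructor
  · rintro ⟨a, b, rfl, rfl⟩
    rw [FreeMonoid.toList_mul, FreeMonoid.toList_mul]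
    exact isRotated_append
  · intro h
    obtain ⟨n, hn, heq⟩ := isRotated_iff_mod.1 h
    refine ⟨FreeMonoid.ofList ((FreeMonoid.toList u).take n),
      FreeMonoid.ofList ((FreeMonoid.toList u).drop n), ?_, ?_⟩
    · apply FreeMonoid.toList.injective
      rw [FreeMonoid.toList_mul, FreeMonoid.toList_ofList, FreeMonoid.toList_ofList,
        take_append_drop]
    · apply FreeMonoid.toList.injective
      rw [FreeMonoid.toList_mul, FreeMonoid.toList_ofList, FreeMonoid.toList_ofList,
        ← rotate_eq_drop_append_take hn, heq]

lemma quot_eq_iff (u v : FreeMonoid I) :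
    Quot.mk (CyclicRel I) u = Quot.mk (CyclicRel I) v ↔
      FreeMonoid.toList u ~r FreeMonoid.toList v := by
  rw [Quot.eq]
  constructor
  · intro h
    induction h with
    | rel x y h => exact (cyclicRel_iff x y).1 h
    | refl x => exact IsRotated.refl _
    | symm x y _ ih => exact ih.symm
    | trans x y z _ _ ih1 ih2 => exact ih1.trans ih2
  · intro h
    exact Relation.EqvGen.rel _ _ ((cyclicRel_iff u v).2 h)

/-! ### reduced words -/

def ReducedL (u : List I) : Prop :=
  ∀ (v : List I) (p : ℕ), 1 < p → u ≠ (replicate p v).flatten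

lemma toList_pow (v : FreeMonoid I) (p : ℕ) :
    FreeMonoid.toList (v ^ p) = (replicate p (FreeMonoid.toList v)).flatten := by
  induction p with
  | zero => simp
  | succ p ih => rw [pow_succ', FreeMonoid.toList_mul, ih, replicate_succ, flatten_cons]

lemma isReducedWord_iff (u : FreeMonoid I) :
    IsReducedWord u ↔ ReducedL (FreeMonoid.toList u) := by
  constructor
  · intro h v p hp heq
    exact h (FreeMonoid.ofList v) p hp (FreeMonoid.toList.injective (by
      rw [toList_pow, FreeMonoid.toList_ofList]; exact heq))
  · intro h v p hp heq
    exact h (FreeMonoid.toList v) p hp (by rw [heq, toList_pow])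

lemma ReducedL.ne_nil {u : List I} (h : ReducedL u) : u ≠ [] := by
  intro he
  exact h [] 2 one_lt_two (by simp [he])

/-! ### the set Z(J, j) at the level of lists -/

def ZL (J : Set (List I)) (j : List I) : Set (List I) :=
  {u | ∃ (p : ℕ) (a : List I), a ∈ J ∧ a ≠ j ∧ u = (replicate p j).flatten ++ a}

lemma mem_Zset_iff (J : Set (List I)) (j : List I) (u : FreeMonoid I) :
    u ∈ Zset {w : FreeMonoid I | FreeMonoid.toList w ∈ J} (FreeMonoid.ofList j) ↔
      FreeMonoid.toList u ∈ ZL J j := by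
  constructor
  · rintro ⟨p, j', h1, h2, rfl⟩
    refine ⟨p, FreeMonoid.toList j', h1, ?_, ?_⟩
    · intro h
      exact h2 (FreeMonoid.toList.injective (by rw [h, FreeMonoid.toList_ofList]))
    · rw [FreeMonoid.toList_mul, toList_pow, FreeMonoid.toList_ofList]
  · rintro ⟨p, a, h1, h2, heq⟩
    refine ⟨p, FreeMonoid.ofList a, by simpa using h1, ?_, ?_⟩
    · intro h
      exact h2 (FreeMonoid.ofList.injective h)
    · apply FreeMonoid.toList.injective
      rw [heq, FreeMonoid.toList_mul, toList_pow, FreeMonoid.toList_ofList,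
        FreeMonoid.toList_ofList]

lemma ZL_ne_nil {J : Set (List I)} {j : List I} (hJ : ∀ u ∈ J, u ≠ [])
    {u : List I} (hu : u ∈ ZL J j) : u ≠ [] := by
  obtain ⟨p, a, h1, _, rfl⟩ := hu
  intro h
  exact hJ a h1 (by simpa using (append_eq_nil_iff.1 h).2)

lemma ZL_cons {J : Set (List I)} {j u : List I} (hu : u ∈ ZL J j) : j ++ u ∈ ZL J j := by
  obtain ⟨p, a, h1, h2, rfl⟩ := hu
  exact ⟨p + 1, a, h1, h2, by rw [replicate_succ, flatten_cons, append_assoc]⟩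

/-! ### deblocking -/

section Deblock

variable [DecidableEq I]
set_option linter.unusedSectionVars false

def deblock (j : List I) : List (List I) → List (List I)
  | [] => []
  | x :: L =>
    if x = j then
      match deblock j L with
      | [] => [j]
      | b :: bs => (j ++ b) :: bs
    else x :: deblock j L

@[simp] lemma deblock_nil (j : List I) : deblock j [] = [] := by rw [deblock]

lemma deblock_cons_ne (j x : List I) (L : List (List I)) (h : x ≠ j) :
    deblock j (x :: L) = x :: deblock j L := by
  rw [deblock, if_neg h]

lemma deblock_cons_eq (j : List I) (L : List (List I)) {b : List I} {bs : List (List I)}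
    (h : deblock j L = b :: bs) :
    deblock j (j :: L) = (j ++ b) :: bs := by
  rw [deblock, if_pos rfl, h]

lemma deblock_ne_nil (j : List I) {L : List (List I)} (h : L ≠ []) : deblock j L ≠ [] := by
  obtain ⟨x, L', rfl⟩ := List.exists_cons_of_ne_nil h
  rw [deblock]
  split
  · split <;> simp
  · simp

lemma deblock_eq_nil (j : List I) {L : List (List I)} (h : deblock j L = []) : L = [] := by
  by_contra hne
  exact deblock_ne_nil j hne h

@[simp] lemma flatten_deblock (j : List I) (L : List (List I)) :
    (deblock j L).flatten = L.flatten := by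
  induction L with
  | nil => simp
  | cons x L ih =>
    by_cases hx : x = j
    · subst hx
      cases hL : deblock x L with
      | nil =>
        have : L = [] := deblock_eq_nil x hL
        subst this
        rw [deblock, if_pos rfl, deblock_nil]
      | cons b bs =>
        rw [deblock_cons_eq x L hL, flatten_cons, flatten_cons, append_assoc,
          ← flatten_cons, ← hL, ih]
    · rw [deblock_cons_ne j x L hx, flatten_cons, flatten_cons, ih]

/-- `lastOK j L` means that the last entry of `L` (if any) differs from `j`. -/
def lastOK (j : List I) (L : List (List I)) : Prop := L.getLast? ≠ some j

lemma lastOK_append {j : List I} (L : List (List I)) {M : List (List I)} (h : M ≠ []) :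
    lastOK j (L ++ M) ↔ lastOK j M := by
  unfold lastOK
  rw [getLast?_append_of_ne_nil L h]

lemma lastOK_concat {j a : List I} (L : List (List I)) : lastOK j (L ++ [a]) ↔ a ≠ j := by
  unfold lastOK
  rw [getLast?_concat]
  simp

lemma lastOK_cons {j x : List I} {L : List (List I)} (h : L ≠ []) :
    lastOK j (x :: L) ↔ lastOK j L := by
  obtain ⟨y, L', rfl⟩ := List.exists_cons_of_ne_nil h
  unfold lastOK
  rw [getLast?_cons_cons]

lemma exists_first_block (j : List I) {L : List (List I)} (h0 : ∃ x ∈ L, x ≠ j) :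
    ∃ p a R, a ≠ j ∧ L = replicate p j ++ a :: R := by
  induction L with
  | nil => simp at h0
  | cons y L ih =>
    by_cases hy : y = j
    · subst hy
      have h0' : ∃ x ∈ L, x ≠ y := by
        obtain ⟨x, hx, hxy⟩ := h0
        rcases mem_cons.1 hx with rfl | hx'
        · exact absurd rfl hxy
        · exact ⟨x, hx', hxy⟩
      obtain ⟨p, a, R, ha, hL⟩ := ih h0'
      exact ⟨p + 1, a, R, ha, by rw [hL, replicate_succ, cons_append]⟩
    · exact ⟨0, y, L, hy, by simp⟩

lemma lastOK.exists_first_block (j : List I) {L : List (List I)} (h0 : L ≠ [])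
    (h1 : lastOK j L) : ∃ p a R, a ≠ j ∧ L = replicate p j ++ a :: R := by
  apply AdmSeq.exists_first_block
  by_contra hall
  push_neg at hall
  have : L.getLast? = some j := by
    obtain ⟨x, hx⟩ : ∃ x, L.getLast? = some x :=
      Option.isSome_iff_exists.1 (by rw [List.getLast?_isSome]; exact h0)
    rw [hx, hall x (List.mem_of_getLast? hx)]
  exact h1 this

lemma deblock_append (j : List I) {R : List (List I)} (T : List (List I)) (h0 : R ≠ [])
    (h1 : lastOK j R) : deblock j (R ++ T) = deblock j R ++ deblock j T := by
  induction R with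
  | nil => exact absurd rfl h0
  | cons x R ih =>
    rcases eq_or_ne R [] with rfl | hR
    · have hx : x ≠ j := by
        unfold lastOK at h1
        simpa using h1
      rw [singleton_append, deblock_cons_ne j x T hx, deblock_cons_ne j x [] hx]
      simp
    · have h1' : lastOK j R := (lastOK_cons hR).1 h1
      have ihh := ih hR h1'
      by_cases hx : x = j
      · subst hx
        obtain ⟨b, bs, hbs⟩ := List.exists_cons_of_ne_nil (deblock_ne_nil x hR)
        have hRT : deblock x (R ++ T) = b :: (bs ++ deblock x T) := by
          rw [ihh, hbs]; simp
        rw [cons_append, deblock_cons_eq x (R ++ T) hRT, deblock_cons_eq x R hbs]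
        simp
      · rw [cons_append, deblock_cons_ne j x (R ++ T) hx, deblock_cons_ne j x R hx, ihh]
        simp

lemma deblock_block (j : List I) (p : ℕ) {a : List I} (R : List (List I)) (ha : a ≠ j) :
    deblock j (replicate p j ++ a :: R) = ((replicate p j).flatten ++ a) :: deblock j R := by
  induction p with
  | zero => simp [deblock_cons_ne j a R ha]
  | succ p ih =>
    rw [replicate_succ, cons_append, deblock_cons_eq j _ ih]
    simp [append_assoc]

lemma deblock_mem {J : Set (List I)} {j : List I} (hj : j ∈ J) :
    ∀ {L : List (List I)}, (∀ x ∈ L, x ∈ J) → lastOK j L →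
      ∀ b ∈ deblock j L, b ∈ ZL J j := by
  intro L
  induction L with
  | nil => intro _ _ b hb; simp at hb
  | cons x L ih =>
    intro hmem h1 b hb
    by_cases hx : x = j
    · subst hx
      have hL : L ≠ [] := by
        rintro rfl
        unfold lastOK at h1
        simp at h1
      obtain ⟨b', bs, hbs⟩ := List.exists_cons_of_ne_nil (deblock_ne_nil x hL)
      rw [deblock_cons_eq x L hbs] at hb
      have hsub : ∀ c ∈ deblock x L, c ∈ ZL J x := by
        refine ih (fun y hy => hmem y (mem_cons_of_mem _ hy)) ((lastOK_cons hL).1 h1)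
      rcases mem_cons.1 hb with rfl | hb'
      · exact ZL_cons (hsub b' (by rw [hbs]; exact mem_cons_self))
      · exact hsub b (by rw [hbs]; exact mem_cons_of_mem _ hb')
    · rw [deblock_cons_ne j x L hx] at hb
      rcases mem_cons.1 hb with rfl | hb'
      · exact ⟨0, b, hmem b (mem_cons_self), hx, by simp⟩
      · rcases eq_or_ne L [] with rfl | hL
        · simp at hb'
        · exact ih (fun y hy => hmem y (mem_cons_of_mem _ hy)) ((lastOK_cons hL).1 h1) b hb'

lemma deblock_rotate (j : List I) :
    ∀ (s : ℕ) (Y : List (List I)), (∀ x ∈ Y, x ≠ ([] : List I)) → Y ≠ [] → lastOK j Y →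
      s < Y.length → lastOK j (Y.rotate s) →
      ∃ s' ≤ (deblock j Y).length, deblock j (Y.rotate s) = (deblock j Y).rotate s' ∧
        sumlen (Y.take s) = sumlen ((deblock j Y).take s') := by
  intro s
  induction s using Nat.strong_induction_on with
  | _ s IH =>
  intro Y hne h0 h1 hs h2
  rcases Nat.eq_zero_or_pos s with rfl | hpos
  · exact ⟨0, Nat.zero_le _, by simp, by simp⟩
  obtain ⟨p, a, R, ha, hY⟩ := lastOK.exists_first_block j h0 h1
  have hY' : Y = (replicate p j ++ [a]) ++ R := by
    rw [hY, append_assoc, singleton_append]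
  have hlen : Y.length = p + 1 + R.length := by
    rw [hY']; simp; omega
  -- exclude s ≤ p
  have hslep : ¬ s ≤ p := by
    intro hsp
    have hrep : replicate s j ≠ ([] : List (List I)) := by
      intro h
      have := congrArg List.length h
      simp at this
      omega
    have htake : Y.take s = replicate s j := by
      rw [hY, take_append_of_le_length (by simpa using hsp), take_replicate,
        Nat.min_def, if_pos hsp]
    have hbad : lastOK j (Y.drop s ++ replicate s j) := by
      rw [← htake, ← rotate_eq_drop_append_take hs.le]
      exact h2
    rw [lastOK_append _ hrep] at hbad
    unfold lastOK at hbad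
    rw [getLast?_replicate, if_neg (by omega)] at hbad
    exact hbad rfl
  have hsp : p + 1 ≤ s := by omega
  have hRne : R ≠ [] := by
    intro hR
    rw [hR] at hlen
    simp at hlen
    omega
  set K := R ++ (replicate p j ++ [a]) with hK
  have hYr : Y.rotate (p+1) = K := by
    rw [hY', rotate_eq_drop_append_take (by simp),
      drop_left' (by simp), take_left' (by simp)]
  have hKlen : K.length = Y.length := by rw [← hYr, length_rotate]
  set s₂ := s - (p+1) with hs₂def
  have hs₂ : s₂ < s := by omega
  have hs₂R : s₂ < R.length := by omega
  have hs₂K : s₂ < K.length := by rw [hKlen, hlen]; omega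
  have hKrot : K.rotate s₂ = Y.rotate s := by
    rw [← hYr, rotate_rotate]
    congr 1
    omega
  have hKne : ∀ x ∈ K, x ≠ ([] : List I) := by
    intro x hx
    apply hne
    rw [← hYr] at hx
    exact mem_rotate.1 hx
  have hK0 : K ≠ [] := by
    apply List.ne_nil_of_length_pos
    rw [hKlen]
    exact length_pos_iff.2 h0
  have hK1 : lastOK j K := by
    rw [hK, ← append_assoc, lastOK_concat]
    exact ha
  have h2₂ : lastOK j (K.rotate s₂) := by rw [hKrot]; exact h2
  obtain ⟨s'₂, hs'le, heq₂, hsum₂⟩ := IH s₂ hs₂ K hKne hK0 hK1 hs₂K h2₂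
  have hdY : deblock j Y = ((replicate p j).flatten ++ a) :: deblock j R := by
    rw [hY]
    exact deblock_block j p R ha
  have hRlast : lastOK j R := by
    have := h1
    rw [hY'] at this
    exact (lastOK_append _ hRne).1 this
  have hdblk : deblock j (replicate p j ++ [a]) = [(replicate p j).flatten ++ a] := by
    have := deblock_block j p ([] : List (List I)) ha
    simpa using this
  have hdK : deblock j K = deblock j R ++ [(replicate p j).flatten ++ a] := by
    rw [hK, deblock_append j _ hRne hRlast, hdblk]
  have hdKlen : (deblock j K).length = (deblock j R).length + 1 := by rw [hdK]; simp
  have hs'lt : s'₂ ≤ (deblock j R).length := by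
    by_contra hgt
    have hs'eq : s'₂ = (deblock j K).length := by omega
    have h1' : sumlen (K.take s₂) < sumlen K := sumlen_take_lt K hKne hs₂K
    have h2' : sumlen ((deblock j K).take s'₂) = sumlen (deblock j K) := by
      rw [hs'eq, take_length]
    have h3' : sumlen (deblock j K) = sumlen K := by
      rw [← length_flatten'', ← length_flatten'', flatten_deblock]
    omega
  refine ⟨s'₂ + 1, ?_, ?_, ?_⟩
  · rw [hdY, length_cons]
    omega
  · have hrot1 : (deblock j Y).rotate 1 = deblock j K := by
      rw [hdY, hdK, rotate_cons_succ, rotate_zero]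
    calc deblock j (Y.rotate s) = deblock j (K.rotate s₂) := by rw [hKrot]
      _ = (deblock j K).rotate s'₂ := heq₂
      _ = ((deblock j Y).rotate 1).rotate s'₂ := by rw [hrot1]
      _ = (deblock j Y).rotate (s'₂ + 1) := by rw [rotate_rotate]; congr 1; omega
  · have hseq : s = (replicate p j ++ [a]).length + s₂ := by simp; omega
    have ht1 : Y.take s = (replicate p j ++ [a]) ++ R.take s₂ := by
      rw [hY', hseq, take_length_add_append]
    have ht2 : K.take s₂ = R.take s₂ := take_append_of_le_length hs₂R.le
    have ht3 : (deblock j K).take s'₂ = (deblock j R).take s'₂ := by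
      rw [hdK]
      exact take_append_of_le_length hs'lt
    have hblk : sumlen (replicate p j ++ [a]) = ((replicate p j).flatten ++ a).length := by
      simp [length_flatten'']
    have hsum₂' : sumlen (R.take s₂) = sumlen ((deblock j R).take s'₂) := by
      rw [← ht2, ← ht3]
      exact hsum₂
    rw [ht1, hdY, take_succ_cons, sumlen_append, sumlen_cons, hblk, hsum₂']

end Deblock

/-! ### the invariant -/

section Good

variable [DecidableEq I]
set_option linter.unusedSectionVars false

structure Good (J : Set (List I)) (F : Set (List I)) : Prop where
  ne_nil : ∀ u ∈ J, u ≠ []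
  nontriv : ∃ a ∈ J, ∃ b ∈ J, a ≠ b
  red : ∀ u ∈ J, ReducedL u
  cstar : ∀ X Y : List (List I), (∀ x ∈ X, x ∈ J) → (∀ y ∈ Y, y ∈ J) →
    X ≠ [] → Y ≠ [] → ∀ t < Y.flatten.length, X.flatten = Y.flatten.rotate t →
    ∃ s ≤ Y.length, X = Y.rotate s ∧ t = sumlen (Y.take s)
  complete : ∀ u : List I, ReducedL u → (∀ f ∈ F, ¬ u ~r f) →
    ∃ X, (∀ x ∈ X, x ∈ J) ∧ X ≠ [] ∧ X.flatten ~r u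
  sep : ∀ X, (∀ x ∈ X, x ∈ J) → X ≠ [] → ∀ f ∈ F, ¬ X.flatten ~r f

lemma singletons_eq (L : List (List I)) (h : ∀ x ∈ L, ∃ i : I, x = [i]) :
    L = L.flatten.map (fun a => [a]) := by
  induction L with
  | nil => simp
  | cons x Lt ih =>
    obtain ⟨i, rfl⟩ := h _ (mem_cons_self)
    rw [flatten_cons, singleton_append, map_cons]
    rw [← ih (fun y hy => h y (mem_cons_of_mem _ hy))]

lemma singletons_sumlen (L : List (List I)) (h : ∀ x ∈ L, ∃ i : I, x = [i]) :
    sumlen L = L.length := by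
  induction L with
  | nil => simp
  | cons x Lt ih =>
    obtain ⟨i, rfl⟩ := h _ (mem_cons_self)
    simp [ih (fun y hy => h y (mem_cons_of_mem _ hy))]
    omega

lemma flatten_map_singleton' (u : List I) : (u.map (fun a => [a])).flatten = u := by
  induction u with
  | nil => simp
  | cons a t ih => simp [ih]

theorem good_base (h2 : ∃ a b : I, a ≠ b) :
    Good {u : List I | ∃ i : I, u = [i]} (∅ : Set (List I)) := by
  constructor
  · rintro u ⟨i, rfl⟩
    simp
  · obtain ⟨a, b, hab⟩ := h2
    exact ⟨[a], ⟨a, rfl⟩, [b], ⟨b, rfl⟩, by simpa⟩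
  · rintro u ⟨i, rfl⟩ v q hq heq
    have := congrArg List.length heq
    rw [length_flatten'', sumlen_replicate, length_singleton] at this
    rcases Nat.eq_zero_or_pos v.length with h0 | h0
    · rw [h0] at this
      simp at this
    · have : 2 * 1 ≤ q * v.length := Nat.mul_le_mul hq h0
      omega
  · intro X Y hX hY hX0 hY0 t ht heq
    have hYlen : Y.flatten.length = Y.length := by
      rw [length_flatten'', singletons_sumlen Y hY]
    refine ⟨t, by omega, ?_, ?_⟩
    · rw [singletons_eq X hX, heq, map_rotate, ← singletons_eq Y hY]
    · rw [singletons_sumlen _ (fun x hx => hY x (take_subset t Y hx)), length_take]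
      omega
  · intro u hu _
    refine ⟨u.map (fun a => [a]), ?_, ?_, ?_⟩
    · intro x hx
      obtain ⟨i, _, rfl⟩ := mem_map.1 hx
      exact ⟨i, rfl⟩
    · intro h
      exact hu.ne_nil (by simpa using h)
    · rw [flatten_map_singleton']
  · intro X _ _ f hf
    exact absurd hf (Set.notMem_empty f)

lemma exists_expansion {J : Set (List I)} {j : List I} (hj : j ∈ J) :
    ∀ X : List (List I), (∀ z ∈ X, z ∈ ZL J j) →
      ∃ Xh : List (List I), (∀ x ∈ Xh, x ∈ J) ∧ deblock j Xh = X ∧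
        (X = [] ∨ (Xh ≠ [] ∧ lastOK j Xh)) := by
  intro X
  induction X with
  | nil => exact fun _ => ⟨[], by simp, by simp, Or.inl rfl⟩
  | cons z X ih =>
    intro hmem
    obtain ⟨p, a, haJ, haj, hz⟩ := hmem z (mem_cons_self)
    obtain ⟨Xh', h1, h2, h3⟩ := ih (fun y hy => hmem y (mem_cons_of_mem _ hy))
    have hdblk : deblock j (replicate p j ++ [a]) = [(replicate p j).flatten ++ a] := by
      simpa using deblock_block j p ([] : List (List I)) haj
    refine ⟨(replicate p j ++ [a]) ++ Xh', ?_, ?_, Or.inr ⟨by simp, ?_⟩⟩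
    · intro x hx
      rcases mem_append.1 hx with hx1 | hx2
      · rcases mem_append.1 hx1 with hr | hs
        · rw [eq_of_mem_replicate hr]; exact hj
        · rw [mem_singleton.1 hs]; exact haJ
      · exact h1 x hx2
    · rw [deblock_append j _ (by simp) (by rw [lastOK_concat]; exact haj), hdblk, h2, hz]
      rfl
    · rcases h3 with hXnil | ⟨hne, hlast⟩
      · have : Xh' = [] := deblock_eq_nil j (by rw [h2, hXnil])
        subst this
        rw [append_nil, lastOK_concat]
        exact haj
      · rw [lastOK_append _ hne]
        exact hlast

theorem good_step {J F : Set (List I)} {j : List I} (hG : Good J F) (hj : j ∈ J) :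
    Good (ZL J j) (insert j F) := by
  have hjne : j ≠ [] := hG.ne_nil j hj
  have hjlen : 0 < j.length := length_pos_iff.2 hjne
  constructor
  · intro u hu
    exact ZL_ne_nil hG.ne_nil hu
  · obtain ⟨a, haJ, b, hbJ, hab⟩ := hG.nontriv
    have hc : ∃ c ∈ J, c ≠ j := by
      rcases eq_or_ne a j with rfl | h
      · exact ⟨b, hbJ, fun hbj => hab (hbj.symm)⟩
      · exact ⟨a, haJ, h⟩
    obtain ⟨c, hcJ, hcj⟩ := hc
    refine ⟨c, ⟨0, c, hcJ, hcj, by simp⟩, j ++ c, ⟨1, c, hcJ, hcj, by simp⟩, ?_⟩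
    intro h
    have := congrArg List.length h
    rw [length_append] at this
    omega
  · rintro u ⟨p, a, haJ, haj, rfl⟩ v q hq heq
    have hane : a ≠ [] := hG.ne_nil a haJ
    set z := (replicate p j).flatten ++ a with hzdef
    have hzne : z ≠ [] := by
      intro h
      exact hane (append_eq_nil_iff.1 h).2
    have hvne : v ≠ [] := by
      rintro rfl
      apply hzne
      rw [heq]
      induction q with
      | zero => simp
      | succ q ih => simpa [replicate_succ] using ih
    have hv1 : 1 ≤ v.length := length_pos_iff.2 hvne
    have hulen : z.length = q * v.length := by
      rw [heq, length_flatten'', sumlen_replicate]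
    have hrot : z.rotate v.length = z := by
      rw [heq, flatten_replicate_rotate q v le_rfl, rotate_length]
    have hX : ∀ x ∈ replicate p j ++ [a], x ∈ J := by
      intro x hx
      rcases mem_append.1 hx with hr | hs
      · rw [eq_of_mem_replicate hr]; exact hj
      · rw [mem_singleton.1 hs]; exact haJ
    have hflat : (replicate p j ++ [a]).flatten = z := by simp [hzdef]
    have ht : v.length < z.length := by
      rw [hulen]
      nlinarith
    obtain ⟨s, hsle, hXeq, hts⟩ := hG.cstar _ _ hX hX (by simp) (by simp) v.length
      (by rw [hflat]; exact ht) (by rw [hflat]; exact hrot.symm)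
    have hYlen : (replicate p j ++ [a]).length = p + 1 := by simp
    rcases Nat.eq_zero_or_pos s with rfl | hspos
    · rw [take_zero, sumlen_nil] at hts
      omega
    rcases eq_or_ne s (p + 1) with rfl | hsne
    · rw [← hYlen, take_length] at hts
      have : sumlen (replicate p j ++ [a]) = z.length := by rw [← length_flatten'', hflat]
      omega
    · have hs_le_p : s ≤ p := by omega
      have hlastX : (replicate p j ++ [a]).getLast? = some a := getLast?_concat
      have hlastR : ((replicate p j ++ [a]).rotate s).getLast? = some j := by
        rw [rotate_eq_drop_append_take (by rw [hYlen]; omega),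
          take_append_of_le_length (by simpa using hs_le_p), take_replicate, Nat.min_def,
          if_pos hs_le_p, getLast?_append_of_ne_nil _ (by simpa using hspos.ne'),
          getLast?_replicate, if_neg (by omega)]
      rw [← hXeq, hlastX] at hlastR
      exact haj (Option.some.inj hlastR)
  · intro X Y hX hY hX0 hY0 t ht heq
    obtain ⟨Xh, hXh1, hXh2, hXh3⟩ := exists_expansion hj X hX
    obtain ⟨Yh, hYh1, hYh2, hYh3⟩ := exists_expansion hj Y hY
    rcases hXh3 with h | ⟨hXhne, hXlast⟩
    · exact absurd h hX0
    rcases hYh3 with h | ⟨hYhne, hYlast⟩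
    · exact absurd h hY0
    have hXflat : X.flatten = Xh.flatten := by rw [← hXh2, flatten_deblock]
    have hYflat : Y.flatten = Yh.flatten := by rw [← hYh2, flatten_deblock]
    obtain ⟨s, hsle, hXYeq, hts⟩ := hG.cstar Xh Yh hXh1 hYh1 hXhne hYhne t
      (by rw [← hYflat]; exact ht) (by rw [← hXflat, ← hYflat]; exact heq)
    have hslt : s < Yh.length := by
      rcases eq_or_ne s Yh.length with rfl | h
      · exfalso
        rw [take_length] at hts
        rw [hYflat, length_flatten''] at ht
        omega
      · omega
    obtain ⟨s', hs'le, heq', hsum'⟩ := deblock_rotate j s Yh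
      (fun x hx => hG.ne_nil x (hYh1 x hx)) hYhne hYlast hslt
      (by rw [← hXYeq]; exact hXlast)
    rw [hYh2] at hs'le heq' hsum'
    refine ⟨s', hs'le, ?_, ?_⟩
    · rw [← hXh2, hXYeq, heq']
    · rw [hts, hsum']
  · intro u hu hF
    have hF' : ∀ f ∈ F, ¬ u ~r f := fun f hf => hF f (Set.mem_insert_of_mem _ hf)
    obtain ⟨X, hX1, hX2, hX3⟩ := hG.complete u hu hF'
    by_cases hall : ∀ x ∈ X, x = j
    · have hXrep : X = replicate X.length j := eq_replicate_of_mem hall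
      have hm : 1 ≤ X.length := length_pos_iff.2 hX2
      obtain ⟨t, hrot⟩ := hX3
      set m := X.length with hmdef
      have hflat : X.flatten = (replicate m j).flatten := by rw [← hXrep]
      have hper : ((replicate m j).flatten).rotate j.length = (replicate m j).flatten := by
        rw [flatten_replicate_rotate m j le_rfl, rotate_length]
      have hb : u = ((replicate m j).flatten).rotate (t % j.length) := by
        rw [← hrot, hflat]
        conv_lhs => rw [show t = (t / j.length) * j.length + t % j.length from by
          rw [Nat.mul_comm]; exact (Nat.div_add_mod t j.length).symm]
        rw [rotate_eq_self_of_rotate_eq _ _ hper]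
      have hu2 : u = (replicate m (j.rotate (t % j.length))).flatten := by
        rw [hb, flatten_replicate_rotate m j (Nat.mod_lt t hjlen).le]
      rcases eq_or_lt_of_le hm with hm1 | hm2
      · have hju : j ~r u := ⟨t % j.length, by rw [hu2, ← hm1]; simp⟩
        exact absurd hju.symm (hF j (Set.mem_insert _ _))
      · exact absurd hu2 (hu _ m hm2)
    · push_neg at hall
      obtain ⟨p, a, R, ha, hXd⟩ := exists_first_block j hall
      have hXd' : X = (replicate p j ++ [a]) ++ R := by
        rw [hXd, append_assoc, singleton_append]
      have hslen : p + 1 ≤ X.length := by rw [hXd']; simp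
      have hXrot : X.rotate (p + 1) = R ++ (replicate p j ++ [a]) := by
        rw [hXd', rotate_eq_drop_append_take (by simp), drop_left' (by simp),
          take_left' (by simp)]
      have hlast : lastOK j (X.rotate (p + 1)) := by
        rw [hXrot, ← append_assoc, lastOK_concat]
        exact ha
      have hmem' : ∀ x ∈ X.rotate (p + 1), x ∈ J := fun x hx => hX1 x (mem_rotate.1 hx)
      have hne' : X.rotate (p + 1) ≠ [] := by
        rw [Ne, rotate_eq_nil_iff]
        exact hX2
      refine ⟨deblock j (X.rotate (p + 1)), deblock_mem hj hmem' hlast,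
        deblock_ne_nil j hne', ?_⟩
      have h1 : (deblock j (X.rotate (p + 1))).flatten = (X.rotate (p + 1)).flatten :=
        flatten_deblock j _
      have h2 : X.flatten ~r (X.rotate (p + 1)).flatten := isRotated_flatten_rotate X _ hslen
      rw [h1]
      exact h2.symm.trans hX3
  · intro X hX hX0 f hf
    obtain ⟨Xh, hXh1, hXh2, hXh3⟩ := exists_expansion hj X hX
    rcases hXh3 with h | ⟨hXhne, hXlast⟩
    · exact absurd h hX0
    have hXflat : X.flatten = Xh.flatten := by rw [← hXh2, flatten_deblock]
    rcases Set.mem_insert_iff.1 hf with rfl | hfF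
    · intro hcon
      obtain ⟨t, htle, hrot⟩ := isRotated_iff_mod.1 hcon.symm
      have hex : ∃ t' < f.length, f.rotate t' = X.flatten := by
        rcases eq_or_lt_of_le htle with rfl | h
        · refine ⟨0, length_pos_iff.2 (hG.ne_nil f hj), ?_⟩
          rw [rotate_length] at hrot
          rw [rotate_zero]
          exact hrot
        · exact ⟨t, h, hrot⟩
      obtain ⟨t', ht', hrot'⟩ := hex
      obtain ⟨s, hsle, hXeq, -⟩ := hG.cstar Xh [f] hXh1 (by simpa using hj) hXhne (by simp) t'
        (by simpa using ht') (by simp; rw [← hXflat]; exact hrot'.symm)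
      rw [rotate_singleton] at hXeq
      rw [hXeq] at hXlast
      unfold lastOK at hXlast
      simp at hXlast
    · intro hcon
      exact hG.sep Xh hXh1 hXhne f hfF (by rw [← hXflat]; exact hcon)

end Good

/-! ### the sequence -/

section Seq

variable (I) [DecidableEq I]
set_option linter.unusedSectionVars false

open Classical in
noncomputable def pick (J : Set (List I)) : List I :=
  if h : J.Nonempty then Function.argminOn List.length J h else []

lemma pick_mem {J : Set (List I)} (h : J.Nonempty) : pick I J ∈ J := by
  classical
  rw [pick, dif_pos h]
  exact Function.argminOn_mem _ _ _

lemma pick_min {J : Set (List I)} {u : List I} (hu : u ∈ J) :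
    (pick I J).length ≤ u.length := by
  classical
  rw [pick, dif_pos ⟨u, hu⟩]
  exact le_of_not_gt (Function.not_lt_argminOn _ _ hu)

noncomputable def Jseq : ℕ → Set (List I)
  | 0 => {u : List I | ∃ i : I, u = [i]}
  | n + 1 => ZL (Jseq n) (pick I (Jseq n))

noncomputable def jseq (n : ℕ) : List I := pick I (Jseq I n)

def Fset (n : ℕ) : Set (List I) := {f | ∃ k < n, f = jseq I k}

lemma Fset_zero : Fset I 0 = ∅ := by
  ext f
  simp [Fset]

lemma Fset_succ (n : ℕ) : Fset I (n + 1) = insert (jseq I n) (Fset I n) := by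
  ext f
  constructor
  · rintro ⟨k, hk, rfl⟩
    rcases Nat.lt_succ_iff_lt_or_eq.1 hk with h | rfl
    · exact Set.mem_insert_of_mem _ ⟨k, h, rfl⟩
    · exact Set.mem_insert _ _
  · rintro (rfl | ⟨k, hk, rfl⟩)
    · exact ⟨n, Nat.lt_succ_self n, rfl⟩
    · exact ⟨k, hk.trans (Nat.lt_succ_self n), rfl⟩

variable {I}

lemma good_seq (h2 : ∃ a b : I, a ≠ b) : ∀ n, Good (Jseq I n) (Fset I n) := by
  intro n
  induction n with
  | zero => rw [Fset_zero]; exact good_base h2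
  | succ n ih =>
    rw [Fset_succ]
    have hne : (Jseq I n).Nonempty := by
      obtain ⟨a, ha, -⟩ := ih.nontriv
      exact ⟨a, ha⟩
    exact good_step ih (pick_mem I hne)

lemma Jseq_nonempty (h2 : ∃ a b : I, a ≠ b) (n : ℕ) : (Jseq I n).Nonempty := by
  obtain ⟨a, ha, -⟩ := (good_seq h2 n).nontriv
  exact ⟨a, ha⟩

lemma jseq_mem (h2 : ∃ a b : I, a ≠ b) (n : ℕ) : jseq I n ∈ Jseq I n :=
  pick_mem I (Jseq_nonempty h2 n)

lemma jseq_min (h2 : ∃ a b : I, a ≠ b) (n : ℕ) {u : List I} (hu : u ∈ Jseq I n) :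
    (jseq I n).length ≤ u.length :=
  pick_min I hu

lemma step_len (n : ℕ) {u : List I} (hu : u ∈ Jseq I (n + 1)) :
    (jseq I n).length ≤ u.length := by
  obtain ⟨p, a, haJ, -, rfl⟩ := hu
  calc (jseq I n).length ≤ a.length := pick_min I haJ
    _ ≤ _ := by rw [length_append]; omega

lemma jseq_len_mono (h2 : ∃ a b : I, a ≠ b) {m n : ℕ} (h : m ≤ n) :
    (jseq I m).length ≤ (jseq I n).length := by
  induction n with
  | zero => simp_all
  | succ n ih =>
    rcases Nat.lt_succ_iff_lt_or_eq.1 (Nat.lt_succ_of_le h) with h' | rfl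
    · exact (ih (by omega)).trans (step_len n (jseq_mem h2 (n + 1)))
    · exact le_rfl

lemma jseq_not_rot (h2 : ∃ a b : I, a ≠ b) {m n : ℕ} (h : m < n) :
    ¬ jseq I n ~r jseq I m := by
  have := (good_seq h2 n).sep [jseq I n] (by simpa using jseq_mem h2 n) (by simp)
    (jseq I m) ⟨m, h, rfl⟩
  simpa using this

lemma jseq_inj (h2 : ∃ a b : I, a ≠ b) : Function.Injective (jseq I) := by
  intro m n h
  by_contra hne
  rcases Nat.lt_or_ge m n with hlt | hge
  · exact jseq_not_rot h2 hlt (by rw [h])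
  · exact jseq_not_rot h2 (by omega : n < m) (by rw [h])

lemma exists_long [Finite I] (h2 : ∃ a b : I, a ≠ b) (p : ℕ) :
    ∃ n₀ : ℕ, p < (jseq I n₀).length := by
  by_contra hno
  push_neg at hno
  have hinf : {l : List I | l.length ≤ p}.Infinite :=
    Set.infinite_of_injective_forall_mem (jseq_inj h2) hno
  exact (List.finite_length_le I p).not_infinite hinf

lemma growth [Finite I] (h2 : ∃ a b : I, a ≠ b) (p : ℕ) :
    ∃ m : ℕ, ∀ n > m, ∀ u ∈ Jseq I n, p < u.length := by
  obtain ⟨n₀, hn₀⟩ := exists_long h2 p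
  refine ⟨n₀, fun n hn u hu => ?_⟩
  calc p < (jseq I n₀).length := hn₀
    _ ≤ (jseq I n).length := jseq_len_mono h2 hn.le
    _ ≤ u.length := jseq_min h2 n hu

lemma exists_rot [Finite I] (h2 : ∃ a b : I, a ≠ b) (u : List I) (hu : ReducedL u) :
    ∃ k, u ~r jseq I k := by
  by_contra hno
  push_neg at hno
  obtain ⟨n₀, hlong⟩ := exists_long h2 u.length
  obtain ⟨X, hX1, hX2, hX3⟩ := (good_seq h2 n₀).complete u hu (by
    rintro f ⟨k, hk, rfl⟩
    exact hno k)
  have hlen : X.flatten.length = u.length := hX3.perm.length_eq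
  obtain ⟨x, Xt, rfl⟩ := List.exists_cons_of_ne_nil hX2
  have h1 : (jseq I n₀).length ≤ x.length := jseq_min h2 n₀ (hX1 x (mem_cons_self))
  rw [flatten_cons, length_append] at hlen
  omega

end Seq

end AdmSeq

/-- For a finite set `I` with at least two elements there is a sequence
`(J_n, j_n)` with `J₀ = I`, `j_n ∈ J_n`, `J_{n+1} = Z(J_n, j_n)`, such that
`Y = {j₀, j₁, …}` is admissible and the minimal length of words of `J_n` tends to
infinity. -/
theorem exists_admissible_sequence (I : Type) [Fintype I] (hI : 2 ≤ Fintype.card I) :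
    ∃ (J : ℕ → Set (FreeMonoid I)) (j : ℕ → FreeMonoid I),
      J 0 = Set.range FreeMonoid.of ∧
      (∀ n, j n ∈ J n) ∧
      (∀ n, J (n + 1) = Zset (J n) (j n)) ∧
      IsAdmissible (Set.range j) ∧
      (∀ p : ℕ, 0 < p → ∃ m : ℕ, ∀ n > m, ∀ u ∈ J n, p < (FreeMonoid.toList u).length) := by

  classical
  have h2 : ∃ a b : I, a ≠ b := Fintype.exists_pair_of_one_lt_card (by omega)
  refine ⟨fun n => {u : FreeMonoid I | FreeMonoid.toList u ∈ AdmSeq.Jseq I n},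
    fun n => FreeMonoid.ofList (AdmSeq.jseq I n), ?_, ?_, ?_, ?_, ?_⟩
  · ext u
    constructor
    · rintro ⟨i, hi⟩
      exact ⟨i, FreeMonoid.toList.injective (by rw [FreeMonoid.toList_of, ← hi])⟩
    · rintro ⟨i, rfl⟩
      exact ⟨i, rfl⟩
  · intro n
    show FreeMonoid.toList (FreeMonoid.ofList (AdmSeq.jseq I n)) ∈ AdmSeq.Jseq I n
    rw [FreeMonoid.toList_ofList]
    exact AdmSeq.jseq_mem h2 n
  · intro n
    ext u
    have : AdmSeq.Jseq I (n + 1) = AdmSeq.ZL (AdmSeq.Jseq I n) (AdmSeq.jseq I n) := rfl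
    show FreeMonoid.toList u ∈ AdmSeq.Jseq I (n+1) ↔ _
    rw [this]
    exact (AdmSeq.mem_Zset_iff (AdmSeq.Jseq I n) (AdmSeq.jseq I n) u).symm
  · refine ⟨?_, ?_, ?_⟩
    · rintro u ⟨n, rfl⟩
      exact ⟨FreeMonoid.ofList (AdmSeq.jseq I n), (AdmSeq.isReducedWord_iff _).2 (by
        rw [FreeMonoid.toList_ofList]
        exact (AdmSeq.good_seq h2 n).red _ (AdmSeq.jseq_mem h2 n)), rfl⟩
    · rintro u ⟨m, rfl⟩ v ⟨n, rfl⟩ h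
      rw [AdmSeq.quot_eq_iff, FreeMonoid.toList_ofList, FreeMonoid.toList_ofList] at h
      rcases lt_trichotomy m n with hlt | heq | hgt
      · exact absurd h.symm (AdmSeq.jseq_not_rot h2 hlt)
      · rw [heq]
      · exact absurd h (AdmSeq.jseq_not_rot h2 hgt)
    · rintro c ⟨u, hu, rfl⟩
      obtain ⟨k, hk⟩ := AdmSeq.exists_rot h2 (FreeMonoid.toList u)
        ((AdmSeq.isReducedWord_iff u).1 hu)
      refine ⟨FreeMonoid.ofList (AdmSeq.jseq I k), ⟨k, rfl⟩, ?_⟩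
      rw [AdmSeq.quot_eq_iff, FreeMonoid.toList_ofList]
      exact hk.symm
  · intro p hp
    obtain ⟨m, hm⟩ := AdmSeq.growth h2 p
    exact ⟨m, fun n hn u hu => hm n hn _ hu⟩
end

section
/- Let G be the group defined by the presentation with generators x̄, t̄ and relations x̄·(t̄ⁿ x̄ t̄⁻ⁿ) = (t̄ⁿ x̄ t̄⁻ⁿ)·x̄ for every n ∈ ℤ. Then there is a group isomorphism G ≅ H carrying x̄ to x and t̄ to t. Consequently, the normal closure of x̄ in G is free abelian with basis {t̄ⁿ x̄ t̄⁻ⁿ : n ∈ ℤ}, and G is the internal semidirect product of this normal closure with the infinite cyclic subgroup generated by t̄. -/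
open Finsupp Multiplicative

/-- The shift automorphism of the free abelian group `ℤ →₀ ℤ`, sending the basis element
`single n 1` (i.e. `x_n`) to `single (n + 1) 1` (i.e. `x_{n+1}`). -/
noncomputable def shiftAut : Multiplicative (ℤ →₀ ℤ) ≃* Multiplicative (ℤ →₀ ℤ) :=
  AddEquiv.toMultiplicative (Finsupp.domCongr (Equiv.addRight (1 : ℤ)))

/-- The action of `ℤ` on the free abelian group `ℤ →₀ ℤ` by shifting. -/
noncomputable def shiftHom : Multiplicative ℤ →* MulAut (Multiplicative (ℤ →₀ ℤ)) :=
  zpowersHom _ (shiftAut : MulAut (Multiplicative (ℤ →₀ ℤ)))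

/-- The wreath product `H = ℤ ≀ ℤ`: the semidirect product of the free abelian group `N`
with basis `{x_n : n ∈ ℤ}` (multiplicative `ℤ →₀ ℤ`) by an infinite cyclic group `⟨t⟩`,
where conjugation by `t` sends `x_n` to `x_{n+1}`. -/
noncomputable abbrev Hgrp : Type :=
  Multiplicative (ℤ →₀ ℤ) ⋊[shiftHom] Multiplicative ℤ

/-- The element `x_n = tⁿ x t⁻ⁿ` of `H`. -/
noncomputable def xE (n : ℤ) : Hgrp :=
  SemidirectProduct.inl (Multiplicative.ofAdd (Finsupp.single n 1))

/-- The element `t` of `H`. -/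
noncomputable def tE : Hgrp :=
  SemidirectProduct.inr (Multiplicative.ofAdd 1)

/-- The generator `x̄` in the free group on two generators (`true ↦ x̄`, `false ↦ t̄`). -/
def xw : FreeGroup Bool := FreeGroup.of true

/-- The generator `t̄`. -/
def tw : FreeGroup Bool := FreeGroup.of false

/-- The relations: the commutators `x̄ (t̄ⁿ x̄ t̄⁻ⁿ) x̄⁻¹ (t̄ⁿ x̄ t̄⁻ⁿ)⁻¹` for all `n ∈ ℤ`,
expressing `x̄ · (t̄ⁿ x̄ t̄⁻ⁿ) = (t̄ⁿ x̄ t̄⁻ⁿ) · x̄`. -/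
def wreathRels : Set (FreeGroup Bool) :=
  ⋃ n : ℤ, {xw * (tw ^ n * xw * tw ^ (-n)) * xw⁻¹ * (tw ^ n * xw * tw ^ (-n))⁻¹}

/-- The group `G` presented by generators `x̄, t̄` and the relations
`x̄ · (t̄ⁿ x̄ t̄⁻ⁿ) = (t̄ⁿ x̄ t̄⁻ⁿ) · x̄` for all `n ∈ ℤ`. -/
abbrev Gpres : Type := PresentedGroup wreathRels

/-- `x̄` as an element of the presented group. -/
def xbar : Gpres := PresentedGroup.of true

/-- `t̄` as an element of the presented group. -/
def tbar : Gpres := PresentedGroup.of false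

namespace WreathAux

open SemidirectProduct

/-! ### Generic facts -/

lemma conj_conj {G : Type*} [Group G] (u a b : G) (h : a * b = b * a) :
    (u * a * u⁻¹) * (u * b * u⁻¹) = (u * b * u⁻¹) * (u * a * u⁻¹) := by
  have h1 : (u * a * u⁻¹) * (u * b * u⁻¹) = u * (a * b) * u⁻¹ := by group
  have h2 : (u * b * u⁻¹) * (u * a * u⁻¹) = u * (b * a) * u⁻¹ := by group
  rw [h1, h2, h]

/-- Homomorphisms out of the multiplicative free abelian group agree if they agree on the
basis elements. -/
lemma multHom_ext {M : Type*} [Group M] {f g : Multiplicative (ℤ →₀ ℤ) →* M}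
    (h : ∀ n : ℤ, f (ofAdd (single n 1)) = g (ofAdd (single n 1))) : f = g := by
  have key : MonoidHom.toAdditiveRight f = MonoidHom.toAdditiveRight g := by
    apply Finsupp.addHom_ext
    intro n k
    have hs : (single n k : ℤ →₀ ℤ) = k • single n 1 := by
      rw [smul_single, smul_eq_mul, mul_one]
    simp only [MonoidHom.coe_toAdditiveRight, Function.comp_apply, hs, ofAdd_zsmul, map_zpow, h n]
  exact MonoidHom.toAdditiveRight.injective key

/-! ### The wreath product side -/

lemma shiftAut_single (m k : ℤ) :
    shiftAut (ofAdd (single m k)) = ofAdd (single (m + 1) k) := by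
  show ofAdd ((Finsupp.domCongr (Equiv.addRight (1 : ℤ))) (single m k)) = _
  rw [Finsupp.domCongr_apply, Finsupp.equivMapDomain_single, Equiv.coe_addRight]

lemma shiftAut_zpow (n : ℤ) : ∀ m k : ℤ,
    ((shiftAut : MulAut (Multiplicative (ℤ →₀ ℤ))) ^ n) (ofAdd (single m k))
      = ofAdd (single (m + n) k) := by
  induction n using Int.induction_on with
  | zero => intro m k; simp
  | succ i ih =>
      intro m k
      have h : (shiftAut : MulAut (Multiplicative (ℤ →₀ ℤ))) ^ ((i : ℤ) + 1)
          = (shiftAut : MulAut (Multiplicative (ℤ →₀ ℤ))) ^ (i : ℤ) * shiftAut := by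
        rw [zpow_add, zpow_one]
      rw [h, MulAut.mul_apply, shiftAut_single, ih,
        show m + 1 + (i : ℤ) = m + ((i : ℤ) + 1) by ring]
  | pred i ih =>
      intro m k
      have hinv : (shiftAut : MulAut (Multiplicative (ℤ →₀ ℤ)))⁻¹ (ofAdd (single m k))
          = ofAdd (single (m - 1) k) := by
        have : shiftAut.symm (ofAdd (single m k)) = ofAdd (single (m - 1) k) :=
          (MulEquiv.symm_apply_eq shiftAut).2 (by rw [shiftAut_single, sub_add_cancel])
        exact this
      have h : (shiftAut : MulAut (Multiplicative (ℤ →₀ ℤ))) ^ (-(i : ℤ) - 1)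
          = (shiftAut : MulAut (Multiplicative (ℤ →₀ ℤ))) ^ (-(i : ℤ))
            * (shiftAut : MulAut (Multiplicative (ℤ →₀ ℤ)))⁻¹ := by
        rw [zpow_sub, zpow_one, zpow_neg]
      rw [h, MulAut.mul_apply, hinv, ih,
        show m - 1 + -(i : ℤ) = m + (-(i : ℤ) - 1) by ring]

lemma tE_zpow (n : ℤ) : tE ^ n = inr (ofAdd n) := by
  rw [tE, ← map_zpow]
  congr 1
  rw [← ofAdd_zsmul, smul_eq_mul, mul_one]

lemma conjE (n m : ℤ) : tE ^ n * xE m * tE ^ (-n) = xE (m + n) := by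
  rw [tE_zpow, tE_zpow, xE, xE]
  rw [show (ofAdd (-n) : Multiplicative ℤ) = (ofAdd n)⁻¹ from rfl]
  rw [← SemidirectProduct.inl_aut]
  congr 1
  show shiftHom (ofAdd n) (ofAdd (single m 1)) = ofAdd (single (m + n) 1)
  rw [shiftHom, zpowersHom_apply, toAdd_ofAdd]
  exact shiftAut_zpow n m 1

lemma xE_comm (a b : ℤ) : xE a * xE b = xE b * xE a := by
  rw [xE, xE, ← map_mul, mul_comm, map_mul]

/-! ### The homomorphism `π : Gpres →* Hgrp` -/

noncomputable def fmap : Bool → Hgrp := fun b => if b then xE 0 else tE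

lemma fmap_true : fmap true = xE 0 := rfl

lemma fmap_false : fmap false = tE := rfl

lemma rels_check : ∀ r ∈ wreathRels, FreeGroup.lift fmap r = 1 := by
  intro r hr
  obtain ⟨n, hn⟩ := Set.mem_iUnion.1 hr
  rw [Set.mem_singleton_iff] at hn
  subst hn
  simp only [map_mul, map_inv, map_zpow, xw, tw, FreeGroup.lift_apply_of, fmap_true, fmap_false]
  have hc : tE ^ n * xE 0 * tE ^ (-n) = xE n := by rw [conjE, zero_add]
  rw [hc]
  have := xE_comm 0 n
  rw [mul_inv_eq_one, mul_inv_eq_iff_eq_mul, this]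

noncomputable def π : Gpres →* Hgrp := PresentedGroup.toGroup rels_check

lemma π_x : π xbar = xE 0 := PresentedGroup.toGroup.of rels_check

lemma π_t : π tbar = tE := PresentedGroup.toGroup.of rels_check

/-! ### The presented group side -/

/-- `x_n = t̄ⁿ x̄ t̄⁻ⁿ` in `Gpres`. -/
noncomputable def xg (n : ℤ) : Gpres := tbar ^ n * xbar * tbar ^ (-n)

lemma xg_zero : xg 0 = xbar := by simp [xg]

lemma mk_rel (n : ℤ) :
    PresentedGroup.mk wreathRels
      (xw * (tw ^ n * xw * tw ^ (-n)) * xw⁻¹ * (tw ^ n * xw * tw ^ (-n))⁻¹) = 1 := by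
  apply (QuotientGroup.eq_one_iff _).2
  exact Subgroup.subset_normalClosure (Set.mem_iUnion.2 ⟨n, rfl⟩)

lemma xbar_comm (n : ℤ) : xbar * xg n = xg n * xbar := by
  have h := mk_rel n
  simp only [map_mul, map_inv, map_zpow] at h
  have hx : PresentedGroup.mk wreathRels xw = xbar := rfl
  have ht : PresentedGroup.mk wreathRels tw = tbar := rfl
  rw [hx, ht] at h
  have h' : xbar * xg n * xbar⁻¹ * (xg n)⁻¹ = 1 := h
  rw [mul_inv_eq_one, mul_inv_eq_iff_eq_mul] at h'
  exact h'

lemma tbar_conj (m k : ℤ) : tbar ^ m * xg k * tbar ^ (-m) = xg (k + m) := by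
  simp only [xg]
  rw [show k + m = m + k by ring, zpow_add, neg_add, zpow_add]
  group

lemma xg_comm (m n : ℤ) : xg m * xg n = xg n * xg m := by
  have e1 : tbar ^ m * xg 0 * tbar ^ (-m) = xg m := by rw [tbar_conj, zero_add]
  have e2 : tbar ^ m * xg (n - m) * tbar ^ (-m) = xg n := by rw [tbar_conj, sub_add_cancel]
  rw [← e1, ← e2]
  have hcomm : xg 0 * xg (n - m) = xg (n - m) * xg 0 := by
    rw [xg_zero]; exact xbar_comm (n - m)
  rw [zpow_neg]
  exact conj_conj _ _ _ hcomm

/-- The subgroup generated by the conjugates `x_n`. -/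
noncomputable def Kgrp : Subgroup Gpres := Subgroup.closure (Set.range xg)

lemma mem_K (n : ℤ) : xg n ∈ Kgrp := Subgroup.subset_closure ⟨n, rfl⟩

lemma K_comm : ∀ a ∈ Kgrp, ∀ b ∈ Kgrp, a * b = b * a := by
  intro a ha b hb
  refine Subgroup.closure_induction₂ (p := fun x y _ _ => Commute x y)
    ?_ ?_ ?_ ?_ ?_ ?_ ?_ ha hb
  · rintro _ _ ⟨m, rfl⟩ ⟨n, rfl⟩; exact xg_comm m n
  · intro x _; exact Commute.one_left x
  · intro x _; exact Commute.one_right x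
  · intro x y z _ _ _ h1 h2; exact h1.mul_left h2
  · intro y z x _ _ _ h1 h2; exact h1.mul_right h2
  · intro x y _ _ h; exact h.inv_left
  · intro x y _ _ h; exact h.inv_right

noncomputable instance : CommGroup Kgrp :=
  { (inferInstance : Group Kgrp) with
    mul_comm := fun a b => Subtype.ext (K_comm a a.2 b b.2) }

/-! ### The homomorphism `ψ` -/

noncomputable def ψ0 : Multiplicative (ℤ →₀ ℤ) →* Kgrp :=
  AddMonoidHom.toMultiplicativeLeft
    (Finsupp.liftAddHom fun n =>
      zmultiplesHom (Additive Kgrp) (Additive.ofMul (⟨xg n, mem_K n⟩ : Kgrp)))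

lemma ψ0_single (n k : ℤ) :
    (ψ0 (ofAdd (single n k)) : Gpres) = xg n ^ k := by
  show ((Finsupp.liftAddHom fun n =>
      zmultiplesHom (Additive Kgrp) (Additive.ofMul (⟨xg n, mem_K n⟩ : Kgrp)))
      (single n k)).toMul.val = xg n ^ k
  rw [Finsupp.liftAddHom_apply_single, zmultiplesHom_apply, toMul_zsmul, toMul_ofMul]
  rfl

noncomputable def ψ : Multiplicative (ℤ →₀ ℤ) →* Gpres := Kgrp.subtype.comp ψ0

lemma ψ_single (n : ℤ) : ψ (ofAdd (single n 1)) = xg n := by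
  show (ψ0 (ofAdd (single n 1)) : Gpres) = xg n
  rw [ψ0_single, zpow_one]

lemma ψ_mem (v : Multiplicative (ℤ →₀ ℤ)) : ψ v ∈ Kgrp := (ψ0 v).2

/-! ### The homomorphism `σ : Hgrp →* Gpres` -/

lemma compat : ∀ g : Multiplicative ℤ,
    ψ.comp (shiftHom g).toMonoidHom
      = (MulAut.conj ((zpowersHom Gpres tbar) g)).toMonoidHom.comp ψ := by
  intro g
  apply multHom_ext
  intro n
  simp only [MonoidHom.comp_apply, MulEquiv.coe_toMonoidHom, MulAut.conj_apply]
  rw [show (shiftHom g) (ofAdd (single n 1)) = ofAdd (single (n + g.toAdd) 1) from by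
    rw [shiftHom, zpowersHom_apply]; exact shiftAut_zpow g.toAdd n 1]
  rw [ψ_single, ψ_single, zpowersHom_apply, ← zpow_neg]
  exact (tbar_conj g.toAdd n).symm

noncomputable def σ : Hgrp →* Gpres :=
  SemidirectProduct.lift ψ (zpowersHom Gpres tbar) compat

lemma σ_inl (v : Multiplicative (ℤ →₀ ℤ)) : σ (inl v) = ψ v :=
  SemidirectProduct.lift_inl ψ (zpowersHom Gpres tbar) compat v

lemma σ_inr (g : Multiplicative ℤ) : σ (inr g) = tbar ^ g.toAdd :=
  SemidirectProduct.lift_inr ψ (zpowersHom Gpres tbar) compat g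

lemma σ_comp_inl : σ.comp inl = ψ :=
  SemidirectProduct.lift_comp_inl ψ (zpowersHom Gpres tbar) compat

lemma π_ψ : π.comp ψ = (inl : Multiplicative (ℤ →₀ ℤ) →* Hgrp) := by
  apply multHom_ext
  intro n
  show π (ψ (ofAdd (single n 1))) = inl (ofAdd (single n 1))
  rw [ψ_single, xg]
  rw [map_mul, map_mul, map_zpow, map_zpow, π_x, π_t]
  rw [conjE, zero_add]
  rfl

lemma σπ : σ.comp π = MonoidHom.id Gpres := by
  apply PresentedGroup.ext
  intro b
  cases b
  · show σ (π tbar) = tbar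
    rw [π_t, tE, σ_inr, toAdd_ofAdd, zpow_one]
  · show σ (π xbar) = xbar
    rw [π_x, xE, σ_inl, ψ_single, xg_zero]

lemma πσ : π.comp σ = MonoidHom.id Hgrp := by
  apply SemidirectProduct.hom_ext
  · rw [MonoidHom.comp_assoc, σ_comp_inl, π_ψ, MonoidHom.id_comp]
  · apply MonoidHom.ext_mint
    show π (σ (inr (ofAdd 1))) = inr (ofAdd 1)
    rw [σ_inr, toAdd_ofAdd, zpow_one, π_t]
    rfl

lemma σπ_apply (g : Gpres) : σ (π g) = g := DFunLike.congr_fun σπ g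

lemma πψ_apply (v : Multiplicative (ℤ →₀ ℤ)) : π (ψ v) = inl v := DFunLike.congr_fun π_ψ v

noncomputable def e : Gpres ≃* Hgrp :=
  { toFun := π
    invFun := σ
    left_inv := σπ_apply
    right_inv := fun h => DFunLike.congr_fun πσ h
    map_mul' := map_mul π }

/-! ### Properties of the range of ψ -/

lemma K_le_NC : Kgrp ≤ Subgroup.normalClosure {xbar} := by
  apply (Subgroup.closure_le _).2
  rintro _ ⟨n, rfl⟩
  have hx : xbar ∈ Subgroup.normalClosure {xbar} :=
    Subgroup.subset_normalClosure rfl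
  have := (Subgroup.normalClosure_normal (s := {xbar})).conj_mem xbar hx (tbar ^ n)
  simpa [xg, zpow_neg] using this

lemma range_le_NC : ψ.range ≤ Subgroup.normalClosure {xbar} := by
  rintro _ ⟨v, rfl⟩
  exact K_le_NC (ψ_mem v)

lemma xbar_mem_range : xbar ∈ ψ.range :=
  ⟨ofAdd (single 0 1), by rw [ψ_single, xg_zero]⟩

lemma range_normal : (ψ.range).Normal := by
  constructor
  rintro _ ⟨v, rfl⟩ g
  have h1 : π (g * ψ v * g⁻¹) ∈ (inl : Multiplicative (ℤ →₀ ℤ) →* Hgrp).range := by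
    rw [SemidirectProduct.range_inl_eq_ker_rightHom, MonoidHom.mem_ker]
    simp only [map_mul, map_inv, πψ_apply, SemidirectProduct.rightHom_inl]
    group
  obtain ⟨w, hw⟩ := h1
  refine ⟨w, ?_⟩
  have := congrArg σ hw
  rw [σπ_apply] at this
  rw [← this, σ_inl]

lemma range_eq_NC : ψ.range = Subgroup.normalClosure {xbar} := by
  refine le_antisymm range_le_NC ?_
  haveI := range_normal
  exact Subgroup.normalClosure_le_normal (by simpa using xbar_mem_range)

lemma ψ_injective : Function.Injective ψ := by
  have h : Function.Injective (π ∘ ψ) := by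
    have : ⇑π ∘ ⇑ψ = ⇑(inl : Multiplicative (ℤ →₀ ℤ) →* Hgrp) := by
      rw [← MonoidHom.coe_comp, π_ψ]
    rw [this]
    exact SemidirectProduct.inl_injective
  exact Function.Injective.of_comp h

end WreathAux

open WreathAux in
/-- The group presented by generators `x̄, t̄` and relations
`x̄ (t̄ⁿ x̄ t̄⁻ⁿ) = (t̄ⁿ x̄ t̄⁻ⁿ) x̄` (`n ∈ ℤ`) is isomorphic to the wreath product
`H = ℤ ≀ ℤ` via `x̄ ↦ x`, `t̄ ↦ t`.  Consequently the normal closure of `x̄` is free abelian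
with basis `{t̄ⁿ x̄ t̄⁻ⁿ : n ∈ ℤ}` and `G` is the internal semidirect product of this normal
closure with the infinite cyclic subgroup generated by `t̄`. -/
theorem presentedGroup_iso_wreath :
    (∃ e : Gpres ≃* Hgrp, e xbar = xE 0 ∧ e tbar = tE) ∧
    (∃ ψ : Multiplicative (ℤ →₀ ℤ) →* Gpres,
      Function.Injective ψ ∧
      ψ.range = Subgroup.normalClosure {xbar} ∧
      ∀ n : ℤ, ψ (Multiplicative.ofAdd (Finsupp.single n 1)) = tbar ^ n * xbar * tbar ^ (-n)) ∧
    Subgroup.normalClosure {xbar} ⊓ Subgroup.zpowers tbar = ⊥ ∧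
    Subgroup.normalClosure {xbar} ⊔ Subgroup.zpowers tbar = ⊤ := by
  refine ⟨⟨e, π_x, π_t⟩, ⟨ψ, ψ_injective, range_eq_NC, fun n => ψ_single n⟩, ?_, ?_⟩
  · rw [eq_bot_iff]
    intro g hg
    obtain ⟨hg1, hg2⟩ := Subgroup.mem_inf.1 hg
    rw [← range_eq_NC] at hg1
    obtain ⟨v, rfl⟩ := hg1
    obtain ⟨k, hk⟩ := Subgroup.mem_zpowers_iff.1 hg2
    have h1 : π (ψ v) = SemidirectProduct.inl v := πψ_apply v
    have h2 : π (ψ v) = SemidirectProduct.inr (ofAdd k) := by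
      rw [← hk, map_zpow, π_t, tE_zpow]
    have h3 : (SemidirectProduct.inl v : Hgrp).right = (SemidirectProduct.inr (ofAdd k) : Hgrp).right := by
      rw [← h1, h2]
    simp only [SemidirectProduct.right_inl, SemidirectProduct.right_inr] at h3
    have hk0 : k = 0 := by
      have := congrArg Multiplicative.toAdd h3
      simpa using this.symm
    rw [Subgroup.mem_bot, ← hk, hk0, zpow_zero]
  · rw [eq_top_iff, ← PresentedGroup.closure_range_of wreathRels]
    apply (Subgroup.closure_le _).2
    rintro _ ⟨b, rfl⟩
    cases b
    · exact Subgroup.mem_sup_right (Subgroup.mem_zpowers tbar)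
    · exact Subgroup.mem_sup_left (Subgroup.subset_normalClosure rfl)
end

section
/- For every nonzero integer p there is a unique group homomorphism f_p : H → H with f_p(x) = x and f_p(t) = tᵖ, and f_p is injective. -/
open Finsupp Multiplicative

noncomputable def mapN (p : ℤ) : Multiplicative (ℤ →₀ ℤ) →* Multiplicative (ℤ →₀ ℤ) :=
  AddMonoidHom.toMultiplicative (Finsupp.mapDomain.addMonoidHom (fun n => p * n))

noncomputable def mapT (p : ℤ) : Multiplicative ℤ →* Multiplicative ℤ :=
  AddMonoidHom.toMultiplicative (zmultiplesHom ℤ p)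

lemma mapN_apply (p : ℤ) (v : ℤ →₀ ℤ) :
    mapN p (ofAdd v) = ofAdd (Finsupp.mapDomain (fun n => p * n) v) := rfl

lemma mapN_single (p n c : ℤ) :
    mapN p (ofAdd (Finsupp.single n c)) = ofAdd (Finsupp.single (p * n) c) := by
  rw [mapN_apply, Finsupp.mapDomain_single]

lemma mapT_apply (p m : ℤ) : mapT p (ofAdd m) = ofAdd (m * p) := by
  simp [mapT, zmultiplesHom_apply, smul_eq_mul]

lemma shiftAut_single (n c : ℤ) :
    shiftAut (ofAdd (Finsupp.single n c)) = ofAdd (Finsupp.single (n + 1) c) := by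
  rw [show shiftAut (ofAdd (Finsupp.single n c))
      = ofAdd (Finsupp.equivMapDomain (Equiv.addRight (1 : ℤ)) (Finsupp.single n c)) from rfl,
    Finsupp.equivMapDomain_single]
  rfl

lemma shiftAut_inv_single (n c : ℤ) :
    shiftAut⁻¹ (ofAdd (Finsupp.single n c)) = ofAdd (Finsupp.single (n - 1) c) := by
  have : shiftAut (ofAdd (Finsupp.single (n - 1) c)) = ofAdd (Finsupp.single n c) := by
    rw [shiftAut_single]; ring_nf
  rw [← this]
  exact (shiftAut.symm_apply_apply _)

lemma shiftAut_zpow_single (m : ℤ) : ∀ n c : ℤ,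
    (shiftAut ^ m : MulAut (Multiplicative (ℤ →₀ ℤ))) (ofAdd (Finsupp.single n c))
      = ofAdd (Finsupp.single (n + m) c) := by
  induction m using Int.induction_on with
  | zero => intro n c; simp
  | succ k ih =>
      intro n c
      have h1 : (shiftAut ^ ((k : ℤ) + 1) : MulAut (Multiplicative (ℤ →₀ ℤ)))
          = (shiftAut ^ (k : ℤ)) * shiftAut := by rw [zpow_add_one]
      rw [h1]
      show (shiftAut ^ (k : ℤ) : MulAut _) (shiftAut (ofAdd (Finsupp.single n c))) = _
      rw [shiftAut_single, ih]
      ring_nf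
  | pred k ih =>
      intro n c
      have h1 : (shiftAut ^ (-(k : ℤ) - 1) : MulAut (Multiplicative (ℤ →₀ ℤ)))
          = (shiftAut ^ (-(k : ℤ))) * shiftAut⁻¹ := by rw [zpow_sub_one]
      rw [h1]
      show (shiftAut ^ (-(k : ℤ)) : MulAut _) (shiftAut⁻¹ (ofAdd (Finsupp.single n c))) = _
      rw [shiftAut_inv_single, ih]
      ring_nf

lemma shiftHom_single' (g : Multiplicative ℤ) (n c : ℤ) :
    shiftHom g (ofAdd (Finsupp.single n c))
      = ofAdd (Finsupp.single (n + Multiplicative.toAdd g) c) := by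
  have : shiftHom g = shiftAut ^ (Multiplicative.toAdd g) := by
    simp [shiftHom, zpowersHom_apply]
  rw [this, shiftAut_zpow_single]

lemma shiftHom_single (m n c : ℤ) :
    shiftHom (ofAdd m) (ofAdd (Finsupp.single n c)) = ofAdd (Finsupp.single (n + m) c) :=
  shiftHom_single' (ofAdd m) n c

lemma comm_cond (p : ℤ) (g : Multiplicative ℤ) :
    (mapN p).comp (shiftHom g).toMonoidHom
      = (shiftHom (mapT p g)).toMonoidHom.comp (mapN p) := by
  refine MonoidHom.ext fun a => ?_
  rw [show a = ofAdd (Multiplicative.toAdd a) from rfl]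
  generalize Multiplicative.toAdd a = w
  induction w using Finsupp.induction_linear with
  | zero =>
      show (mapN p) (shiftHom g 1) = shiftHom (mapT p g) (mapN p 1)
      simp
  | add f v hf hv =>
      show (mapN p) (shiftHom g (ofAdd f * ofAdd v))
          = shiftHom (mapT p g) (mapN p (ofAdd f * ofAdd v))
      simp only [map_mul]
      exact congrArg₂ (· * ·) hf hv
  | single n c =>
      show (mapN p) (shiftHom g (ofAdd (Finsupp.single n c)))
          = shiftHom (mapT p g) (mapN p (ofAdd (Finsupp.single n c)))
      rw [shiftHom_single', mapN_single, mapN_single, shiftHom_single']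
      rw [show Multiplicative.toAdd (mapT p g) = Multiplicative.toAdd g * p by
        simp [mapT, zmultiplesHom_apply, smul_eq_mul, mul_comm]]
      rw [show p * (n + Multiplicative.toAdd g) = p * n + Multiplicative.toAdd g * p by ring]

lemma tE_zpow (n : ℤ) : tE ^ n = SemidirectProduct.inr (ofAdd n) := by
  rw [tE, ← map_zpow]
  congr 1
  rw [← ofAdd_zsmul]
  norm_num

lemma xE_eq (n : ℤ) : xE n = tE ^ n * xE 0 * (tE ^ n)⁻¹ := by
  rw [tE_zpow, xE, xE, ← map_inv, ← SemidirectProduct.inl_aut, shiftHom_single, zero_add]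

lemma xE_zpow_eq (n c : ℤ) :
    SemidirectProduct.inl (ofAdd (Finsupp.single n c)) = xE n ^ c := by
  rw [xE, ← map_zpow, ← ofAdd_zsmul, Finsupp.smul_single, smul_eq_mul, mul_one]

lemma uniq_aux (p : ℤ) (g₁ g₂ : Hgrp →* Hgrp)
    (hx₁ : g₁ (xE 0) = xE 0) (ht₁ : g₁ tE = tE ^ p)
    (hx₂ : g₂ (xE 0) = xE 0) (ht₂ : g₂ tE = tE ^ p) : g₁ = g₂ := by
  have hxn : ∀ (g : Hgrp →* Hgrp), g (xE 0) = xE 0 → g tE = tE ^ p →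
      ∀ n : ℤ, g (xE n) = (tE ^ p) ^ n * xE 0 * ((tE ^ p) ^ n)⁻¹ := by
    intro g hx ht n
    rw [xE_eq n, map_mul, map_mul, map_inv, map_zpow, ht, hx]
  apply SemidirectProduct.hom_ext
  · refine MonoidHom.ext fun a => ?_
    rw [show a = ofAdd (Multiplicative.toAdd a) from rfl]
    generalize Multiplicative.toAdd a = w
    induction w using Finsupp.induction_linear with
    | zero => show g₁ (SemidirectProduct.inl 1) = g₂ (SemidirectProduct.inl 1); simp
    | add f v hf hv =>
        show g₁ (SemidirectProduct.inl (ofAdd f * ofAdd v))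
            = g₂ (SemidirectProduct.inl (ofAdd f * ofAdd v))
        simp only [map_mul]
        exact congrArg₂ (· * ·) hf hv
    | single n c =>
        show g₁ (SemidirectProduct.inl (ofAdd (Finsupp.single n c)))
            = g₂ (SemidirectProduct.inl (ofAdd (Finsupp.single n c)))
        rw [xE_zpow_eq, map_zpow, map_zpow, hxn g₁ hx₁ ht₁, hxn g₂ hx₂ ht₂]
  · apply MonoidHom.ext_mint
    show g₁ tE = g₂ tE
    rw [ht₁, ht₂]

/-- For every nonzero integer `p` there is a unique group homomorphism
`f_p : H → H` with `f_p x = x` and `f_p t = tᵖ`, and `f_p` is injective. -/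
theorem exists_unique_injective_fp (p : ℤ) (hp : p ≠ 0) :
    ∃ f : Hgrp →* Hgrp,
      f (xE 0) = xE 0 ∧ f tE = tE ^ p ∧ Function.Injective f ∧
      ∀ g : Hgrp →* Hgrp, g (xE 0) = xE 0 → g tE = tE ^ p → g = f := by
  refine ⟨SemidirectProduct.map (mapN p) (mapT p) (comm_cond p), ?_, ?_, ?_, ?_⟩
  · rw [xE, SemidirectProduct.map_inl, mapN_single, mul_zero]
  · rw [tE_zpow, tE, SemidirectProduct.map_inr, mapT_apply, one_mul]
  · intro a b hab
    have hl : mapN p a.left = mapN p b.left := by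
      have := congrArg SemidirectProduct.left hab
      simpa using this
    have hr : mapT p a.right = mapT p b.right := by
      have := congrArg SemidirectProduct.right hab
      simpa using this
    have hNinj : Function.Injective (mapN p) := by
      intro u v huv
      have : Finsupp.mapDomain (fun n => p * n) (Multiplicative.toAdd u)
          = Finsupp.mapDomain (fun n => p * n) (Multiplicative.toAdd v) := huv
      exact Multiplicative.toAdd.injective
        (Finsupp.mapDomain_injective (mul_right_injective₀ hp) this)
    have hTinj : Function.Injective (mapT p) := by
      intro u v huv
      have h1 : Multiplicative.toAdd u * p = Multiplicative.toAdd v * p := by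
        have := congrArg Multiplicative.toAdd huv
        simpa [mapT, zmultiplesHom_apply, smul_eq_mul] using this
      exact Multiplicative.toAdd.injective (mul_right_cancel₀ hp h1)
    exact SemidirectProduct.ext (hNinj hl) (hTinj hr)
  · intro g hgx hgt
    refine uniq_aux p g _ hgx hgt ?_ ?_
    · rw [xE, SemidirectProduct.map_inl, mapN_single, mul_zero]
    · rw [tE_zpow, tE, SemidirectProduct.map_inr, mapT_apply, one_mul]
end

section
/- For every integer n ≥ 0 one has (1 − t + t x)·U_n = (1 − t + t² x t⁻¹)·V_n in ℤ[H]; equivalently, W_n = (U_n, V_n) belongs to K = ker f. -/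
open Finsupp Multiplicative

/-- The integral group ring `ℤ[H]`. -/
noncomputable abbrev Agr : Type := MonoidAlgebra ℤ Hgrp

/-- The element `x_i ∈ ℤ[H]`. -/
noncomputable def XA (i : ℤ) : Agr := MonoidAlgebra.of ℤ Hgrp (xE i)

/-- The element `t ∈ ℤ[H]`. -/
noncomputable def TA : Agr := MonoidAlgebra.of ℤ Hgrp tE

/-- `y_i = 1 - x_i`. -/
noncomputable def yA (i : ℤ) : Agr := 1 - XA i

/-- `z_i = x_{i-1} - x_i`. -/
noncomputable def zA (i : ℤ) : Agr := XA (i - 1) - XA i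

/-- The product `y₀ y₋₁ ⋯ y_k` (equal to `1` when `k > 0`). -/
noncomputable def yProd (k : ℤ) : Agr :=
  ((List.range (1 - k).toNat).map (fun i => yA (-(i : ℤ)))).prod

/-- `U_n = z_{−n} − t^{n+1} z₁ y₀ y₋₁ ⋯ y₋ₙ`. -/
noncomputable def UU (n : ℕ) : Agr :=
  zA (-(n : ℤ)) - TA ^ (n + 1) * zA 1 * yProd (-(n : ℤ))

/-- `V_n = z_{−n} + Σ_{i=1}^{n} tⁱ z_{−n} z₁ y₀ y₋₁ ⋯ y_{2−i} − t^{n+1} z₁ y₀ ⋯ y_{1−n} y_{−1−n}`. -/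
noncomputable def VV (n : ℕ) : Agr :=
  zA (-(n : ℤ)) + (∑ i ∈ Finset.Icc 1 n, TA ^ i * zA (-(n : ℤ)) * zA 1 * yProd (2 - (i : ℤ)))
    - TA ^ (n + 1) * zA 1 * yProd (1 - (n : ℤ)) * yA (-1 - (n : ℤ))

/-- `W_n = (U_n, V_n) ∈ ℤ[H] ⊕ ℤ[H]`. -/
noncomputable def WW (n : ℕ) : Agr × Agr := (UU n, VV n)

/-- `1 − t + t x ∈ ℤ[H]`. -/
noncomputable def aElt : Agr := 1 - TA + TA * XA 0

/-- `1 − t + t² x t⁻¹ ∈ ℤ[H]`. -/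
noncomputable def bElt : Agr := 1 - TA + MonoidAlgebra.of ℤ Hgrp (tE ^ 2 * xE 0 * tE⁻¹)

/-- The homomorphism of right `ℤ[H]`-modules
`f(U, V) = (1 − t + t x)·U − (1 − t + t² x t⁻¹)·V`;
right `ℤ[H]`-modules are `ℤ[H]ᵐᵒᵖ`-modules. -/
noncomputable def fMap : (Agr × Agr) →ₗ[Agrᵐᵒᵖ] Agr where
  toFun p := aElt * p.1 - bElt * p.2
  map_add' v w := by
    simp only [Prod.fst_add, Prod.snd_add, mul_add]
    abel
  map_smul' c v := by
    simp only [Prod.smul_fst, Prod.smul_snd, MulOpposite.smul_eq_mul_unop, RingHom.id_apply]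
    rw [sub_mul, mul_assoc, mul_assoc]

/-! Since `1 − t + t x = 1 − t y₀` and `1 − t + t² x t⁻¹ = 1 − t y₁`, the identity amounts to
`U_n − V_n = t (y₀ U_n − y₁ V_n)`. Push every `y_i` to the right of the powers of `t` using
`y_i tᵐ = tᵐ y_{i−m}`, and rearrange the rest freely, as all `x_i` commute. With
`w_j = tʲ z_{−n} z₁ y₀ ⋯ y_{1−j}` this gives `y₀ U_n − y₁ V_n = −∑_{j ≤ n} w_j`, while
`U_n − V_n = −t ∑_{j ≤ n} w_j`: the sum in `V_n` is `∑_{j < n} t w_j`, and the two `t^{n+1}` tails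
differ by `t w_n`. -/

open Finset

lemma shiftHom_ofAdd_one (i : ℤ) :
    shiftHom (ofAdd 1) (ofAdd (single i 1)) = ofAdd (single (i + 1) 1) := by
  simp [shiftHom, shiftAut, zpowersHom_apply]

lemma tE_mul_xE (i : ℤ) : tE * xE i = xE (i + 1) * tE := by
  rw [xE, xE, ← shiftHom_ofAdd_one, SemidirectProduct.inl_aut, tE, map_inv, inv_mul_cancel_right]

-- The image of the commutative ring `ℤ[N]`, `N` being the base group of the wreath product.
noncomputable def baseSubring : Subring Agr :=
  (MonoidAlgebra.mapDomainRingHom ℤ (SemidirectProduct.inl (φ := shiftHom))).range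

lemma commute_of_mem_baseSubring {a b : Agr} (ha : a ∈ baseSubring) (hb : b ∈ baseSubring) :
    Commute a b := by
  obtain ⟨a, rfl⟩ := ha
  obtain ⟨b, rfl⟩ := hb
  exact (Commute.all a b).map _

@[simp]
lemma XA_mem_baseSubring (i : ℤ) : XA i ∈ baseSubring :=
  ⟨MonoidAlgebra.of ℤ _ (ofAdd (single i 1)), by simp [XA, xE, MonoidAlgebra.of_apply]⟩

@[simp]
lemma yA_mem_baseSubring (i : ℤ) : yA i ∈ baseSubring :=
  sub_mem (one_mem _) (XA_mem_baseSubring i)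

@[simp]
lemma zA_mem_baseSubring (i : ℤ) : zA i ∈ baseSubring :=
  sub_mem (XA_mem_baseSubring _) (XA_mem_baseSubring i)

@[simp]
lemma yProd_mem_baseSubring (k : ℤ) : yProd k ∈ baseSubring :=
  list_prod_mem fun _ hy => by
    obtain ⟨i, -, rfl⟩ := List.mem_map.mp hy
    exact yA_mem_baseSubring _

lemma TA_mul_XA (i : ℤ) : TA * XA i = XA (i + 1) * TA := by
  rw [TA, XA, XA, ← map_mul, ← map_mul, tE_mul_xE]

lemma XA_mul_TA_pow (i : ℤ) (m : ℕ) : XA i * TA ^ m = TA ^ m * XA (i - m) := by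
  induction m generalizing i with
  | zero => simp
  | succ m ih =>
    rw [pow_succ, ← mul_assoc, ih, mul_assoc, mul_assoc, TA_mul_XA]
    congr 3
    push_cast
    ring

lemma yA_mul_TA_pow (i : ℤ) (m : ℕ) : yA i * TA ^ m = TA ^ m * yA (i - m) := by
  rw [yA, yA, sub_mul, mul_sub, one_mul, mul_one, XA_mul_TA_pow]

lemma yProd_one : yProd 1 = 1 := by simp [yProd]

lemma yProd_neg_natCast (m : ℕ) : yProd (-m) = yProd (1 - m) * yA (-m) := by
  rw [yProd, yProd, show (1 - -(m : ℤ)).toNat = m + 1 by omega,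
    show (1 - (1 - (m : ℤ))).toNat = m by omega]
  simp [List.range_succ]

lemma aElt_eq : aElt = 1 - TA * yA 0 := by
  rw [aElt, yA, mul_sub, mul_one]
  abel

lemma bElt_eq : bElt = 1 - TA * yA 1 := by
  have h : tE ^ 2 * xE 0 * tE⁻¹ = tE * xE 1 := by
    rw [pow_two, mul_assoc tE, tE_mul_xE, zero_add, ← mul_assoc, mul_inv_cancel_right]
  rw [bElt, h, map_mul, yA, mul_sub, mul_one]
  change 1 - TA + TA * XA 1 = _
  abel

noncomputable def wTerm (n j : ℕ) : Agr :=
  TA ^ j * (zA (-n) * zA 1 * yProd (1 - j))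

lemma wTerm_zero (n : ℕ) : wTerm n 0 = zA (-n) * zA 1 := by
  simp [wTerm, yProd_one]

lemma sum_Icc_eq_sum_TA_mul_wTerm (n : ℕ) :
    ∑ i ∈ Icc 1 n, TA ^ i * zA (-n) * zA 1 * yProd (2 - i) = ∑ j ∈ range n, TA * wTerm n j := by
  rw [← Ico_add_one_right_eq_Icc, sum_Ico_eq_sum_range, Nat.add_sub_cancel]
  refine sum_congr rfl fun j _ => ?_
  rw [wTerm, add_comm 1 j, pow_succ', show (2 : ℤ) - (j + 1 : ℕ) = 1 - j by push_cast; ring]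
  simp only [mul_assoc]

lemma yA_one_mul_TA_mul_wTerm (n j : ℕ) : yA 1 * (TA * wTerm n j) = wTerm n (j + 1) := by
  have hj : (1 : ℤ) - (j + 1 : ℕ) = -j := by push_cast; ring
  have hy : Commute (yA (-j)) (zA (-n) * zA 1 * yProd (1 - j)) :=
    commute_of_mem_baseSubring (by simp) (by simp [mul_mem])
  calc yA 1 * (TA * wTerm n j)
      = yA 1 * TA ^ (j + 1) * (zA (-n) * zA 1 * yProd (1 - j)) := by
        rw [wTerm, pow_succ']
        simp only [mul_assoc]
    _ = TA ^ (j + 1) * (zA (-n) * zA 1 * yProd (1 - j) * yA (-j)) := by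
        rw [yA_mul_TA_pow, hj, mul_assoc, hy.eq]
    _ = wTerm n (j + 1) := by
        rw [wTerm, hj, yProd_neg_natCast]
        simp only [mul_assoc]

lemma UU_tail_sub_VV_tail (n : ℕ) :
    TA ^ (n + 1) * zA 1 * yProd (-n) - TA ^ (n + 1) * zA 1 * yProd (1 - n) * yA (-1 - n) =
      TA * wTerm n n := by
  have hy : yA (-n) - yA (-1 - n) = zA (-n) := by
    rw [yA, yA, zA, show -(n : ℤ) - 1 = -1 - n by ring]
    abel
  have hz : Commute (zA 1 * yProd (1 - n)) (zA (-n)) :=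
    commute_of_mem_baseSubring (by simp [mul_mem]) (by simp)
  calc TA ^ (n + 1) * zA 1 * yProd (-n) - TA ^ (n + 1) * zA 1 * yProd (1 - n) * yA (-1 - n)
      = TA ^ (n + 1) * (zA 1 * yProd (1 - n) * (yA (-n) - yA (-1 - n))) := by
        rw [yProd_neg_natCast]
        simp only [mul_sub, mul_assoc]
    _ = TA * wTerm n n := by
        rw [hy, hz.eq, wTerm, pow_succ']
        simp only [mul_assoc]

lemma yA_zero_mul_UU_tail_eq_yA_one_mul_VV_tail (n : ℕ) :
    yA 0 * (TA ^ (n + 1) * zA 1 * yProd (-n)) =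
      yA 1 * (TA ^ (n + 1) * zA 1 * yProd (1 - n) * yA (-1 - n)) := by
  have h0 : (0 : ℤ) - (n + 1 : ℕ) = -1 - n := by push_cast; ring
  have h1 : (1 : ℤ) - (n + 1 : ℕ) = -n := by push_cast; ring
  have hc0 : Commute (yA (-1 - n)) (zA 1 * yProd (1 - n) * yA (-n)) :=
    commute_of_mem_baseSubring (by simp) (by simp [mul_mem])
  have hc1 : Commute (yA (-n)) (zA 1 * yProd (1 - n)) :=
    commute_of_mem_baseSubring (by simp) (by simp [mul_mem])
  calc yA 0 * (TA ^ (n + 1) * zA 1 * yProd (-n))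
      = yA 0 * TA ^ (n + 1) * (zA 1 * yProd (1 - n) * yA (-n)) := by
        rw [yProd_neg_natCast]
        simp only [mul_assoc]
    _ = TA ^ (n + 1) * (yA (-n) * (zA 1 * yProd (1 - n)) * yA (-1 - n)) := by
        rw [yA_mul_TA_pow, h0, mul_assoc, hc0.eq, hc1.eq]
    _ = yA 1 * TA ^ (n + 1) * (zA 1 * yProd (1 - n) * yA (-1 - n)) := by
        rw [yA_mul_TA_pow, h1]
        simp only [mul_assoc]
    _ = yA 1 * (TA ^ (n + 1) * zA 1 * yProd (1 - n) * yA (-1 - n)) := by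
        simp only [mul_assoc]

lemma UU_sub_VV (n : ℕ) : UU n - VV n = -(TA * ∑ j ∈ range (n + 1), wTerm n j) := by
  rw [Finset.mul_sum, sum_range_succ, ← UU_tail_sub_VV_tail, UU, VV, sum_Icc_eq_sum_TA_mul_wTerm]
  abel

lemma yA_zero_mul_UU_sub_yA_one_mul_VV (n : ℕ) :
    yA 0 * UU n - yA 1 * VV n = -∑ j ∈ range (n + 1), wTerm n j := by
  have hy : yA 0 - yA 1 = -zA 1 := by
    rw [yA, yA, zA, sub_self]
    abel
  have hz : yA 0 * zA (-n) - yA 1 * zA (-n) = -(zA (-n) * zA 1) := by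
    rw [← sub_mul, hy, neg_mul,
      (commute_of_mem_baseSubring (zA_mem_baseSubring 1) (zA_mem_baseSubring _)).eq]
  rw [sum_range_succ', wTerm_zero, UU, VV, sum_Icc_eq_sum_TA_mul_wTerm, mul_sub, mul_sub, mul_add,
    yA_zero_mul_UU_tail_eq_yA_one_mul_VV_tail, Finset.mul_sum]
  simp only [yA_one_mul_TA_mul_wTerm]
  rw [neg_add, ← hz]
  abel

lemma aElt_mul_UU_eq_bElt_mul_VV (n : ℕ) : aElt * UU n = bElt * VV n := by
  rw [← sub_eq_zero]
  calc aElt * UU n - bElt * VV n = (UU n - VV n) - TA * (yA 0 * UU n - yA 1 * VV n) := by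
        rw [aElt_eq, bElt_eq]
        noncomm_ring
    _ = 0 := by rw [UU_sub_VV, yA_zero_mul_UU_sub_yA_one_mul_VV, mul_neg, sub_neg_eq_add,
        neg_add_cancel]

/-- `(1 − t + t x)·U_n = (1 − t + t² x t⁻¹)·V_n` in `ℤ[H]`;
equivalently `W_n = (U_n, V_n)` lies in `K = ker f`. -/
theorem w_mem_ker (n : ℕ) :
    aElt * UU n = bElt * VV n ∧ WW n ∈ LinearMap.ker fMap := by
  have h := aElt_mul_UU_eq_bElt_mul_VV n
  exact ⟨h, LinearMap.mem_ker.mpr (sub_eq_zero.mpr h)⟩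
end

section
/- For all integers p, q with 0 ≤ p < q, the identity W_q·z_{−p} − W_p·z_{−q} − W_{q−p−1}·(t^{p+1} z₁ y₀ y₋₁ ⋯ y₋ₚ) = 0 holds in ℤ[H] ⊕ ℤ[H], where W·a denotes the right scalar action of a ∈ ℤ[H] on ℤ[H] ⊕ ℤ[H]. -/
open Finsupp Multiplicative

/-!
Write `s_p = t^{p+1} z₁ y₀ ⋯ y₋ₚ`, so that `U_n = z_{−n} − s_n`, and
`P_n = Σ_{j=0}^{n} t^{j+1} z₁ y₀ ⋯ y_{1−j}`; since `y_{−n} − y_{−1−n} = z_{−n}`, one has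
`V_n = U_n + P_n z_{−n}`. All these elements are of the form `t^k c` with `c` in the commutative
ring `ℤ[N]`, and `t^k c = σ^k(c) t^k` for the shift `σ : x_i ↦ x_{i+1}`. Commuting powers of `t`
past elements of `ℤ[N]` gives `z_i s_p = s_p z_{i−p−1}` and
`t^k z₁ y₀ ⋯ y_{1−j} · s_p = t^{k+p+1} z₁ y₀ ⋯ y_{−p−j} z_{−p}`; hence, for `q = p + m + 1`, `s_m s_p = s_q z_{−p}` and `P_m s_p = (P_q − P_p) z_{−p}`. With these,
both components of the relation cancel term by term.
-/

open Finset

noncomputable abbrev RN : Type := MonoidAlgebra ℤ (Multiplicative (ℤ →₀ ℤ))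

noncomputable def ιN : RN →+* Agr := MonoidAlgebra.mapDomainRingHom ℤ SemidirectProduct.inl

noncomputable def shiftR : RN →+* RN := MonoidAlgebra.mapDomainRingHom ℤ shiftAut.toMonoidHom

noncomputable def xR (i : ℤ) : RN := MonoidAlgebra.of ℤ _ (ofAdd (single i 1))

noncomputable def yR (i : ℤ) : RN := 1 - xR i

noncomputable def zR (i : ℤ) : RN := xR (i - 1) - xR i

noncomputable def yRun (a : ℤ) (n : ℕ) : RN := ∏ i ∈ range n, yR (a - i)

lemma tE_mul_inl (g : Multiplicative (ℤ →₀ ℤ)) :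
    tE * SemidirectProduct.inl g = SemidirectProduct.inl (shiftAut g) * tE := by
  have h := SemidirectProduct.inl_aut (φ := shiftHom) (ofAdd 1) g
  have hshift : shiftHom (ofAdd 1) = shiftAut := by
    rw [shiftHom, zpowersHom_apply, toAdd_ofAdd, zpow_one]
  rw [hshift] at h
  rw [tE, h, map_inv, inv_mul_cancel_right]

lemma TA_mul_ιN (c : RN) : TA * ιN c = ιN (shiftR c) * TA := by
  induction c using MonoidAlgebra.induction_linear with
  | zero => simp
  | add f g hf hg => rw [map_add, map_add, map_add, mul_add, add_mul, hf, hg]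
  | single g c => simp [ιN, shiftR, TA, MonoidAlgebra.single_mul_single, tE_mul_inl]

lemma TA_pow_mul_ιN (n : ℕ) (c : RN) : TA ^ n * ιN c = ιN ((shiftR ^ n) c) * TA ^ n := by
  induction n generalizing c with
  | zero => simp
  | succ n ih =>
    rw [pow_succ, mul_assoc, TA_mul_ιN, ← mul_assoc, ih, mul_assoc, ← pow_succ, pow_succ]
    rfl

lemma TA_pow_mul_ιN_mul_TA_pow_mul_ιN (k n : ℕ) (c d : RN) :
    TA ^ k * ιN ((shiftR ^ n) c) * (TA ^ n * ιN d) = TA ^ (k + n) * ιN (c * d) := by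
  rw [mul_assoc, ← mul_assoc (ιN _), ← TA_pow_mul_ιN, mul_assoc, ← map_mul, ← mul_assoc, pow_add]

lemma shiftR_xR (i : ℤ) : shiftR (xR i) = xR (i + 1) := by
  simp [shiftR, xR, shiftAut]

lemma shiftR_pow_xR (n : ℕ) (i : ℤ) : (shiftR ^ n) (xR i) = xR (i + n) := by
  induction n with
  | zero => simp
  | succ n ih =>
    rw [pow_succ', RingHom.coe_mul, Function.comp_apply, ih, shiftR_xR]
    push_cast
    ring_nf

lemma shiftR_pow_yR (n : ℕ) (i : ℤ) : (shiftR ^ n) (yR i) = yR (i + n) := by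
  rw [yR, map_sub, map_one, shiftR_pow_xR, yR]

lemma shiftR_pow_zR (n : ℕ) (i : ℤ) : (shiftR ^ n) (zR i) = zR (i + n) := by
  rw [zR, map_sub, shiftR_pow_xR, shiftR_pow_xR, zR, sub_add_eq_add_sub]

lemma shiftR_pow_yRun (n : ℕ) (a : ℤ) (k : ℕ) : (shiftR ^ n) (yRun a k) = yRun (a + n) k := by
  simp only [yRun, map_prod, shiftR_pow_yR, sub_add_eq_add_sub]

lemma yRun_add (a : ℤ) (m n : ℕ) : yRun a (m + n) = yRun a m * yRun (a - m) n := by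
  simp only [yRun, prod_range_add, Nat.cast_add, sub_sub]

lemma ιN_xR (i : ℤ) : ιN (xR i) = XA i := by
  simp [ιN, xR, XA, xE]

lemma ιN_yR (i : ℤ) : ιN (yR i) = yA i := by
  rw [yR, map_sub, map_one, ιN_xR, yA]

lemma ιN_zR (i : ℤ) : ιN (zR i) = zA i := by
  rw [zR, map_sub, ιN_xR, ιN_xR, zA]

lemma zA_mul_comm (i j : ℤ) : zA i * zA j = zA j * zA i := by
  rw [← ιN_zR, ← ιN_zR, ← map_mul, ← map_mul, mul_comm]

lemma yProd_eq_ιN_yRun (k : ℤ) : yProd k = ιN (yRun 0 (1 - k).toNat) := by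
  change _ = ιN ((List.range _).map _).prod
  rw [map_list_prod, List.map_map, yProd]
  simp only [bind_pure_comp, List.map_eq_map, List.map_map]
  refine congrArg List.prod (List.map_congr_left fun i _ => ?_)
  simp [ιN_yR]

lemma yProd_one_sub (n : ℕ) : yProd (1 - n) = ιN (yRun 0 n) := by
  rw [yProd_eq_ιN_yRun, sub_sub_cancel, Int.toNat_natCast]

lemma yProd_neg (n : ℕ) : yProd (-n) = ιN (yRun 0 (n + 1)) := by
  rw [← yProd_one_sub]
  push_cast
  ring_nf

noncomputable def sElt (p : ℕ) : Agr := TA ^ (p + 1) * zA 1 * yProd (-(p : ℤ))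

lemma sElt_eq (p : ℕ) : sElt p = TA ^ (p + 1) * ιN (zR 1 * yRun 0 (p + 1)) := by
  rw [sElt, map_mul, ιN_zR, ← mul_assoc, yProd_neg]

lemma zA_mul_sElt (i : ℤ) (p : ℕ) : zA i * sElt p = sElt p * zA (i - (p + 1)) := by
  have hz : zR i = (shiftR ^ (p + 1)) (zR (i - (p + 1))) := by
    rw [shiftR_pow_zR]
    push_cast
    ring_nf
  rw [sElt_eq, ← ιN_zR, hz, ← mul_assoc, ← TA_pow_mul_ιN, ← ιN_zR]
  simp only [mul_assoc, ← map_mul]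
  rw [mul_comm (zR _), mul_assoc]

lemma TA_pow_mul_zA_mul_yProd_mul_sElt (k j p : ℕ) :
    TA ^ k * zA 1 * yProd (1 - j) * sElt p
      = TA ^ (k + (p + 1)) * zA 1 * yProd (1 - (p + 1 + j : ℕ)) * zA (-p) := by
  have hc : zR 1 * yRun 0 j = (shiftR ^ (p + 1)) (zR (-p) * yRun (-(p + 1 : ℕ)) j) := by
    rw [map_mul, shiftR_pow_zR, shiftR_pow_yRun]
    push_cast
    ring_nf
  rw [sElt_eq, ← ιN_zR, yProd_one_sub, yProd_one_sub, mul_assoc (TA ^ k), ← map_mul, hc,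
    TA_pow_mul_ιN_mul_TA_pow_mul_ιN, ← ιN_zR]
  simp only [mul_assoc, ← map_mul]
  rw [yRun_add 0 (p + 1) j, zero_sub]
  ring_nf

lemma sElt_mul_sElt (m p : ℕ) : sElt m * sElt p = sElt (p + m + 1) * zA (-p) := by
  have hm : yProd (-m) = yProd (1 - (m + 1 : ℕ)) := by
    push_cast
    ring_nf
  rw [sElt, hm, TA_pow_mul_zA_mul_yProd_mul_sElt, sElt, show p + 1 + (m + 1) = p + m + 1 + 1 by omega]
  push_cast
  ring_nf

lemma UU_eq_sub_sElt (n : ℕ) : UU n = zA (-n) - sElt n := rfl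

lemma UU_relation (p m : ℕ) :
    UU (p + m + 1) * zA (-p) - UU p * zA (-(p + m + 1 : ℕ)) - UU m * sElt p = 0 := by
  have hq : zA (-m - (p + 1)) = zA (-(p + m + 1 : ℕ)) := by
    push_cast
    ring_nf
  simp only [UU_eq_sub_sElt, sub_mul]
  rw [zA_mul_sElt, sElt_mul_sElt, hq, zA_mul_comm (-p)]
  abel

noncomputable def PP (n : ℕ) : Agr := ∑ j ∈ range (n + 1), TA ^ (j + 1) * zA 1 * yProd (1 - j)

lemma PP_mul_sElt (m p : ℕ) : PP m * sElt p = (PP (p + m + 1) - PP p) * zA (-p) := by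
  rw [PP, PP, PP, show p + m + 1 + 1 = p + 1 + (m + 1) by omega, sum_range_add _ (p + 1),
    add_sub_cancel_left, Finset.sum_mul, Finset.sum_mul]
  refine sum_congr rfl fun j _ => ?_
  rw [TA_pow_mul_zA_mul_yProd_mul_sElt, show j + 1 + (p + 1) = p + 1 + j + 1 by omega]

lemma VV_eq_UU_add_PP_mul (n : ℕ) : VV n = UU n + PP n * zA (-n) := by
  have hsum : ∑ i ∈ Icc 1 n, TA ^ i * zA (-n) * zA 1 * yProd (2 - i)
      = ∑ j ∈ range n, TA ^ (j + 1) * zA 1 * yProd (1 - j) * zA (-n) := by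
    rw [← Ico_add_one_right_eq_Icc, sum_Ico_eq_sum_range, Nat.add_sub_cancel]
    refine sum_congr rfl fun j _ => ?_
    rw [show (2 : ℤ) - (1 + j : ℕ) = 1 - j by push_cast; ring, yProd_one_sub, ← ιN_zR, ← ιN_zR,
      add_comm 1 j]
    simp only [mul_assoc, ← map_mul]
    congr 2
    ring
  have hlast : TA ^ (n + 1) * zA 1 * yProd (-n) - TA ^ (n + 1) * zA 1 * yProd (1 - n) * yA (-1 - n)
      = TA ^ (n + 1) * zA 1 * yProd (1 - n) * zA (-n) := by
    rw [yProd_neg, yProd_one_sub, yRun_add, ← ιN_yR, ← ιN_zR, ← ιN_zR]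
    simp only [mul_assoc, ← map_mul, ← mul_sub, ← map_sub]
    rw [show yRun (0 - n) 1 - yR (-1 - n) = zR (-n) by
      simp only [yRun, range_one, prod_singleton, yR, zR]; ring_nf]
  rw [VV, UU, PP, hsum, Finset.sum_mul, sum_range_succ, ← hlast]
  abel

lemma PP_relation (p m : ℕ) :
    PP (p + m + 1) * zA (-(p + m + 1 : ℕ)) * zA (-p) - PP p * zA (-p) * zA (-(p + m + 1 : ℕ))
      - PP m * zA (-m) * sElt p = 0 := by
  have hq : zA (-m - (p + 1)) = zA (-(p + m + 1 : ℕ)) := by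
    push_cast
    ring_nf
  rw [mul_assoc (PP m), zA_mul_sElt, hq, ← mul_assoc, PP_mul_sElt, mul_assoc (PP (p + m + 1)),
    zA_mul_comm _ (-p), sub_mul, sub_mul, ← mul_assoc]
  abel

/-- For all `0 ≤ p < q` one has
`W_q·z_{−p} − W_p·z_{−q} − W_{q−p−1}·(t^{p+1} z₁ y₀ y₋₁ ⋯ y₋ₚ) = 0` in `ℤ[H] ⊕ ℤ[H]`,
where the right scalar action of `a ∈ ℤ[H]` is `MulOpposite.op a • ·`. -/
theorem w_relation (p q : ℕ) (hpq : p < q) :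
    MulOpposite.op (zA (-(p : ℤ))) • WW q - MulOpposite.op (zA (-(q : ℤ))) • WW p
      - MulOpposite.op (TA ^ (p + 1) * zA 1 * yProd (-(p : ℤ))) • WW (q - p - 1) = 0 := by
  obtain ⟨m, rfl⟩ : ∃ m, q = p + m + 1 := ⟨q - p - 1, by omega⟩
  rw [show p + m + 1 - p - 1 = m by omega]
  simp only [WW, Prod.smul_mk, MulOpposite.smul_eq_mul_unop, MulOpposite.unop_op, Prod.mk_sub_mk,
    Prod.mk_eq_zero, ← sElt.eq_1]
  refine ⟨UU_relation p m, ?_⟩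
  rw [VV_eq_UU_add_PP_mul, VV_eq_UU_add_PP_mul, VV_eq_UU_add_PP_mul, ← add_zero 0]
  nth_rewrite 1 [← UU_relation p m]
  rw [← PP_relation p m]
  simp only [add_mul]
  abel
end
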